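/- arXiv:2311.01436 — 8 statements merged into one kernel-verified Lean document; each statement's English description precedes it below -/
import Mathlib

section
/- If T is Kreiss bounded on a Banach space X with constant K, then ‖T^n‖ ≤ K·e·(n+1) for all n ∈ ℕ. -/
/-!
Writing `z = λ⁻¹`, the Kreiss condition says that `z ↦ (1 - z • T)⁻¹` is holomorphic on the open
unit disc with `‖(1 - z • T)⁻¹‖ ≤ K / (1 - |z|)`. Its Taylor coefficients at `0` are the powers
`T ^ n`, so Cauchy's estimate on the circle `|z| = r` gives `‖T ^ n‖ ≤ K / ((1 - r) r ^ n)`.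
The choice `r = (n + 1) / (n + 2)`, i.e. `|λ| = 1 + 1 / (n + 1)`, makes this
`K (n + 1) (1 + 1 / (n + 1)) ^ (n + 1) ≤ K e (n + 1)`.
-/

open Metric Real
open scoped NNReal

theorem Ring.inverse_smul_of_ne_zero {𝕜 A : Type*} [Field 𝕜] [Ring A] [Algebra 𝕜 A] {c : 𝕜}
    (hc : c ≠ 0) (x : A) : Ring.inverse (c • x) = c⁻¹ • Ring.inverse x := by
  have hunit : Ring.inverse (algebraMap 𝕜 A c) = algebraMap 𝕜 A c⁻¹ := by
    simpa using Ring.inverse_unit (Units.map (algebraMap 𝕜 A).toMonoidHom (Units.mk0 c hc))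
  rw [Algebra.smul_def, Algebra.smul_def, Ring.inverse_mul (.inl ((Ne.isUnit hc).map _)), hunit,
    Algebra.commutes]

theorem HasFPowerSeriesAt.norm_coeff_le_of_forall_mem_sphere_norm_le {E : Type*}
    [NormedAddCommGroup E] [NormedSpace ℂ E] [CompleteSpace E] {f : ℂ → E}
    {p : FormalMultilinearSeries ℂ ℂ E} {c : ℂ} {R C : ℝ} (hp : HasFPowerSeriesAt f p c)
    (hR : 0 < R) (hf : DiffContOnCl ℂ f (ball c R)) (hC : ∀ z ∈ sphere c R, ‖f z‖ ≤ C) (n : ℕ) :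
    ‖p n‖ ≤ C / R ^ n := by
  lift R to ℝ≥0 using hR.le
  have hcauchy : p = cauchyPowerSeries f c R :=
    hp.eq_formalMultilinearSeries (hf.hasFPowerSeriesOnBall hR).hasFPowerSeriesAt
  have hint : ∫ θ in 0..2 * π, ‖f (circleMap c R θ)‖ ≤ 2 * π * C :=
    calc _ ≤ ‖∫ θ in 0..2 * π, ‖f (circleMap c R θ)‖‖ := le_abs_self _
      _ ≤ C * |2 * π - 0| := intervalIntegral.norm_integral_le_of_norm_le_const fun θ _ => by
          simpa using hC _ (circleMap_mem_sphere c hR.le θ)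
      _ = 2 * π * C := by rw [sub_zero, abs_of_pos two_pi_pos, mul_comm]
  calc ‖p n‖ = ‖cauchyPowerSeries f c R n‖ := by rw [hcauchy]
    _ ≤ ((2 * π)⁻¹ * ∫ θ in 0..2 * π, ‖f (circleMap c R θ)‖) * |(R : ℝ)|⁻¹ ^ n :=
      norm_cauchyPowerSeries_le _ _ _ _
    _ ≤ ((2 * π)⁻¹ * (2 * π * C)) * |(R : ℝ)|⁻¹ ^ n := by gcongr
    _ = C / R ^ n := by
      rw [abs_of_pos hR, ← mul_assoc, inv_mul_cancel₀ two_pi_pos.ne', one_mul, inv_pow,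
        div_eq_mul_inv]

theorem one_div_one_sub_div_mul_pow_le_exp_one_mul (n : ℕ) :
    1 / ((1 - (n + 1) / (n + 2)) * ((n + 1) / (n + 2)) ^ n) ≤ exp 1 * (n + 1 : ℝ) := by
  have h : 1 / ((1 - (n + 1) / (n + 2)) * ((n + 1) / (n + 2)) ^ n) =
      (n + 1 : ℝ) * (1 + ((n + 1 : ℕ) : ℝ)⁻¹) ^ (n + 1) := by
    have h1 : 1 - (n + 1 : ℝ) / (n + 2) = 1 / (n + 2) := by field_simp; ring
    have h2 : 1 + ((n + 1 : ℕ) : ℝ)⁻¹ = (n + 2) / (n + 1) := by push_cast; field_simp; ring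
    rw [h1, h2, div_pow, div_pow, pow_succ]
    field_simp
    ring
  rw [h, mul_comm]
  gcongr
  exact one_add_inv_pow_le_exp

def IsKreissBounded {A : Type*} [NormedRing A] [NormedAlgebra ℂ A] (a : A) (K : ℝ) : Prop :=
  ∀ lam : ℂ, 1 < ‖lam‖ →
    IsUnit (lam • (1 : A) - a) ∧ ‖Ring.inverse (lam • (1 : A) - a)‖ ≤ K / (‖lam‖ - 1)

namespace IsKreissBounded

variable {A : Type*} [NormedRing A] [NormedAlgebra ℂ A] {a : A} {K : ℝ}

theorem nonneg (h : IsKreissBounded a K) : 0 ≤ K := by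
  have h2 := (h 2 (by norm_num)).2
  norm_num at h2
  exact (norm_nonneg _).trans h2

theorem one_sub_smul_eq_smul_inv_smul_one_sub {z : ℂ} (hz : z ≠ 0) :
    (1 : A) - z • a = z • (z⁻¹ • 1 - a) := by
  rw [smul_sub, smul_smul, mul_inv_cancel₀ hz, one_smul]

theorem isUnit_one_sub_smul (h : IsKreissBounded a K) {z : ℂ} (hz : ‖z‖ < 1) :
    IsUnit (1 - z • a) := by
  rcases eq_or_ne z 0 with rfl | hz0
  · simp
  rw [one_sub_smul_eq_smul_inv_smul_one_sub hz0]
  exact (isUnit_smul_iff (Units.mk0 z hz0) _).2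
    (h z⁻¹ (by rwa [norm_inv, one_lt_inv₀ (norm_pos_iff.2 hz0)])).1

theorem norm_inverse_one_sub_smul_le (h : IsKreissBounded a K) {z : ℂ} (hz : z ≠ 0)
    (hz1 : ‖z‖ < 1) : ‖Ring.inverse (1 - z • a)‖ ≤ K / (1 - ‖z‖) := by
  have hz0 : 0 < ‖z‖ := norm_pos_iff.2 hz
  have hres := (h z⁻¹ (by rwa [norm_inv, one_lt_inv₀ hz0])).2
  rw [norm_inv] at hres
  rw [one_sub_smul_eq_smul_inv_smul_one_sub hz, Ring.inverse_smul_of_ne_zero hz, norm_smul,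
    norm_inv]
  calc ‖z‖⁻¹ * ‖Ring.inverse (z⁻¹ • 1 - a)‖ ≤ ‖z‖⁻¹ * (K / (‖z‖⁻¹ - 1)) := by gcongr
    _ = K / (1 - ‖z‖) := by
      have : 1 - ‖z‖ ≠ 0 := by linarith
      field_simp

variable [CompleteSpace A]

theorem differentiableOn_inverse_one_sub_smul (h : IsKreissBounded a K) :
    DifferentiableOn ℂ (fun z : ℂ => Ring.inverse (1 - z • a)) (ball 0 1) := fun z hz =>
  ((differentiableAt_inverse (h.isUnit_one_sub_smul (mem_ball_zero_iff.1 hz))).comp z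
    ((differentiableAt_id.smul_const a).const_sub 1)).differentiableWithinAt

theorem norm_pow_le (h : IsKreissBounded a K) {r : ℝ} (hr0 : 0 < r) (hr1 : r < 1) (n : ℕ) :
    ‖a ^ n‖ ≤ K / ((1 - r) * r ^ n) := by
  have hseries := (spectrum.hasFPowerSeriesOnBall_inverse_one_sub_smul ℂ a).hasFPowerSeriesAt
  have hdiff : DiffContOnCl ℂ (fun z : ℂ => Ring.inverse (1 - z • a)) (ball 0 r) :=
    (h.differentiableOn_inverse_one_sub_smul.mono
      (closure_ball_subset_closedBall.trans (closedBall_subset_ball hr1))).diffContOnCl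
  have hcircle : ∀ z ∈ sphere (0 : ℂ) r, ‖Ring.inverse (1 - z • a)‖ ≤ K / (1 - r) := by
    intro z hz
    rw [mem_sphere_zero_iff_norm] at hz
    have hz0 : z ≠ 0 := norm_pos_iff.1 (hz ▸ hr0)
    simpa [hz] using h.norm_inverse_one_sub_smul_le hz0 (hz ▸ hr1)
  simpa [ContinuousMultilinearMap.norm_mkPiRing, div_div] using
    hseries.norm_coeff_le_of_forall_mem_sphere_norm_le hr0 hdiff hcircle n

end IsKreissBounded

/-- If `T` is Kreiss bounded on a complex Banach space `X` with constant `K`, then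
`‖T^n‖ ≤ K·e·(n+1)` for all `n : ℕ`. -/
theorem kreiss_bounded_growth
    {X : Type*} [NormedAddCommGroup X] [NormedSpace ℂ X] [CompleteSpace X]
    (T : X →L[ℂ] X) (K : ℝ)
    (hT : ∀ lam : ℂ, 1 < ‖lam‖ →
      IsUnit (lam • (1 : X →L[ℂ] X) - T) ∧
      ‖Ring.inverse (lam • (1 : X →L[ℂ] X) - T)‖ ≤ K / (‖lam‖ - 1)) :
    ∀ n : ℕ, ‖T ^ n‖ ≤ K * Real.exp 1 * (n + 1) := by
  intro n
  have h : IsKreissBounded T K := hT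
  have hr0 : (0 : ℝ) < (n + 1) / (n + 2) := by positivity
  have hr1 : ((n + 1) / (n + 2) : ℝ) < 1 := by rw [div_lt_one (by positivity)]; linarith
  calc ‖T ^ n‖ ≤ K / ((1 - (n + 1) / (n + 2)) * ((n + 1) / (n + 2)) ^ n) :=
        h.norm_pow_le hr0 hr1 n
    _ = K * (1 / ((1 - (n + 1) / (n + 2)) * ((n + 1) / (n + 2)) ^ n)) := div_eq_mul_one_div _ _
    _ ≤ K * (exp 1 * (n + 1)) := by
        gcongr
        · exact h.nonneg
        · exact one_div_one_sub_div_mul_pow_le_exp_one_mul n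
    _ = K * exp 1 * (n + 1) := (mul_assoc _ _ _).symm
end

section
/- If T is strongly Kreiss bounded on a Banach space X with constant K_s (i.e., ‖(λ-T)^{-n}‖ ≤ K_s/(|λ|-1)^n for all |λ|>1 and n ∈ ℕ), then ‖e^{ξT}‖ ≤ K_s e^{|ξ|} for all ξ ∈ ℂ. -/
/-!
The exponential `e^{ξT}` is the limit of the Euler approximants `(1 - (ξ/n) T)⁻¹ ^ n`: both
`e^{ξT/n}` and `(1 - ξT/n)⁻¹` have norm at most `e^{2|ξ|‖T‖/n}` and differ by `O(1/n²)`, so their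
`n`-th powers differ by `O(1/n)`. Since `(1 - (ξ/n) T)⁻¹ = λ (λ - T)⁻¹` with `λ = n/ξ`, the strong
Kreiss bound at `λ` gives `‖(1 - (ξ/n) T)⁻ⁿ‖ ≤ Ks (1 - |ξ|/n)⁻ⁿ → Ks e^{|ξ|}`. The case `ξ = 0`
follows by continuity.
-/

open Filter Topology NormedSpace
open scoped Nat

section NormedRing

variable {A : Type*} [NormedRing A]

theorem norm_pow_le_of_norm_one_le (h1 : ‖(1 : A)‖ ≤ 1) (a : A) : ∀ n : ℕ, ‖a ^ n‖ ≤ ‖a‖ ^ n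
  | 0 => by simpa using h1
  | n + 1 => norm_pow_le' a n.succ_pos

theorem norm_pow_sub_pow_le {x y : A} {M : ℝ} (hx : ‖x‖ ≤ M) (hy : ‖y‖ ≤ M) (n : ℕ) :
    ‖x ^ (n + 1) - y ^ (n + 1)‖ ≤ (n + 1) * M ^ n * ‖x - y‖ := by
  induction n with
  | zero => simp
  | succ n ih =>
    have hM : 0 ≤ M := (norm_nonneg x).trans hx
    have hxn : ‖x ^ (n + 1)‖ ≤ M ^ (n + 1) :=
      (norm_pow_le' x n.succ_pos).trans (pow_le_pow_left₀ (norm_nonneg x) hx _)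
    have hsplit : x ^ (n + 2) - y ^ (n + 2) =
        x ^ (n + 1) * (x - y) + (x ^ (n + 1) - y ^ (n + 1)) * y := by
      rw [pow_succ x (n + 1), pow_succ y (n + 1)]; noncomm_ring
    calc ‖x ^ (n + 2) - y ^ (n + 2)‖
        ≤ ‖x ^ (n + 1)‖ * ‖x - y‖ + ‖x ^ (n + 1) - y ^ (n + 1)‖ * ‖y‖ := by
          rw [hsplit]
          exact (norm_add_le _ _).trans (add_le_add (norm_mul_le _ _) (norm_mul_le _ _))
      _ ≤ M ^ (n + 1) * ‖x - y‖ + (n + 1) * M ^ n * ‖x - y‖ * M := by gcongr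
      _ = (↑(n + 1) + 1) * M ^ (n + 1) * ‖x - y‖ := by push_cast; ring

theorem norm_inverse_one_sub_le [HasSummableGeomSeries A] (h1 : ‖(1 : A)‖ ≤ 1) {a : A}
    (ha : ‖a‖ < 1) : ‖Ring.inverse (1 - a)‖ ≤ (1 - ‖a‖)⁻¹ := by
  rw [← geom_series_eq_inverse a ha]
  linarith [tsum_geometric_le_of_norm_lt_one a ha]

theorem norm_inverse_one_sub_inv_smul_pow_le {𝕜 : Type*} [NormedField 𝕜] [NormedAlgebra 𝕜 A]
    {T : A} {lam : 𝕜} (hlam : lam ≠ 0) {n : ℕ} {K : ℝ}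
    (hT : ‖Ring.inverse (lam • 1 - T) ^ n‖ ≤ K / (‖lam‖ - 1) ^ n) :
    ‖Ring.inverse (1 - lam⁻¹ • T) ^ n‖ ≤ K / (1 - ‖lam‖⁻¹) ^ n := by
  have hres : Ring.inverse (1 - lam⁻¹ • T) = lam • Ring.inverse (lam • 1 - T) := by
    simpa [resolvent, Algebra.algebraMap_eq_smul_one, Units.smul_def] using
      (spectrum.units_smul_resolvent_self (r := Units.mk0 lam hlam) (a := T)).symm
  have hlam' : 0 < ‖lam‖ := norm_pos_iff.2 hlam
  calc ‖Ring.inverse (1 - lam⁻¹ • T) ^ n‖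
      = ‖lam‖ ^ n * ‖Ring.inverse (lam • 1 - T) ^ n‖ := by
        rw [hres, smul_pow, norm_smul, norm_pow]
    _ ≤ ‖lam‖ ^ n * (K / (‖lam‖ - 1) ^ n) := by gcongr
    _ = K / (1 - ‖lam‖⁻¹) ^ n := by
      rw [show 1 - ‖lam‖⁻¹ = (‖lam‖ - 1) / ‖lam‖ by field_simp, div_pow, div_div_eq_mul_div]
      ring

end NormedRing

theorem Real.inv_one_sub_le_exp_two_mul {t : ℝ} (ht0 : 0 ≤ t) (ht : t ≤ 1 / 2) :
    (1 - t)⁻¹ ≤ Real.exp (2 * t) := by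
  calc (1 - t)⁻¹ ≤ 1 + 2 * t := by
        rw [inv_le_iff_one_le_mul₀ (by linarith)]; nlinarith
    _ ≤ Real.exp (2 * t) := by linarith [Real.add_one_le_exp (2 * t)]

theorem Real.tendsto_div_one_sub_div_pow_mul_exp (K t : ℝ) :
    Tendsto (fun n : ℕ => K / (1 - t / n) ^ n) atTop (𝓝 (K * Real.exp t)) := by
  have h := Real.tendsto_one_add_div_pow_exp (-t)
  simp only [neg_div, ← sub_eq_add_neg, Real.exp_neg] at h
  rw [← div_inv_eq_mul]
  exact tendsto_const_nhds.div h (inv_ne_zero (Real.exp_ne_zero t))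

section CompleteNormedAlgebra

variable {A : Type*} [NormedRing A] [CompleteSpace A]

theorem norm_exp_le_real_exp_norm (𝕂 : Type*) [RCLike 𝕂] [NormedAlgebra 𝕂 A]
    (h1 : ‖(1 : A)‖ ≤ 1) (a : A) : ‖exp a‖ ≤ Real.exp ‖a‖ := by
  rw [Real.exp_eq_exp_ℝ]
  refine (exp_series_hasSum_exp' (𝕂 := 𝕂) a).norm_le_of_bounded (expSeries_div_hasSum_exp ‖a‖)
    fun n => ?_
  rw [norm_smul, norm_inv, RCLike.norm_natCast, div_eq_inv_mul]
  gcongr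
  exact norm_pow_le_of_norm_one_le h1 a n

theorem norm_exp_sub_inverse_one_sub_le (𝕂 : Type*) [RCLike 𝕂] [NormedAlgebra 𝕂 A] {a : A}
    (ha : ‖a‖ < 1) : ‖exp a - Ring.inverse (1 - a)‖ ≤ ‖a‖ ^ 2 * (1 - ‖a‖)⁻¹ := by
  have hsum := (exp_series_hasSum_exp' (𝕂 := 𝕂) a).sub (hasSum_geom_series_inverse a ha)
  rw [← hasSum_nat_add_iff' 2] at hsum
  simp only [Finset.sum_sub_distrib, Finset.sum_range_succ, Finset.range_one,
    Finset.sum_singleton, Nat.factorial_zero, Nat.factorial_one, Nat.cast_one, inv_one, pow_zero,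
    pow_one, one_smul, sub_self, sub_zero] at hsum
  refine hsum.norm_le_of_bounded
    ((hasSum_geometric_of_lt_one (norm_nonneg a) ha).mul_left (‖a‖ ^ 2)) fun n => ?_
  have hc : ‖(((n + 2)! : 𝕂)⁻¹ - 1)‖ ≤ 1 := by
    have hr : 0 < ((n + 2)! : ℝ)⁻¹ := by positivity
    have hr1 : ((n + 2)! : ℝ)⁻¹ ≤ 1 :=
      inv_le_one_of_one_le₀ (by exact_mod_cast (n + 2).factorial_pos)
    rw [show (((n + 2)! : 𝕂)⁻¹ - 1) = ((((n + 2)! : ℝ)⁻¹ - 1 : ℝ) : 𝕂) by push_cast; ring,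
      RCLike.norm_ofReal, abs_le]
    constructor <;> linarith
  calc ‖((n + 2)! : 𝕂)⁻¹ • a ^ (n + 2) - a ^ (n + 2)‖
      = ‖(((n + 2)! : 𝕂)⁻¹ - 1)‖ * ‖a ^ (n + 2)‖ := by rw [← norm_smul, sub_smul, one_smul]
    _ ≤ 1 * ‖a‖ ^ (n + 2) := by gcongr; exact norm_pow_le' a (by omega)
    _ = ‖a‖ ^ 2 * ‖a‖ ^ n := by ring

theorem exp_eq_exp_inv_smul_pow (𝕂 : Type*) [RCLike 𝕂] [NormedAlgebra 𝕂 A] (a : A) {n : ℕ}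
    (hn : n ≠ 0) : exp a = exp ((n : 𝕂)⁻¹ • a) ^ n := by
  -- `exp_nsmul` is stated for normed `ℚ`-algebras, and `A` is not one by instance.
  let +nondep : NormedAlgebra ℚ A := NormedAlgebra.restrictScalars ℚ 𝕂 A
  rw [← exp_nsmul, ← Nat.cast_smul_eq_nsmul 𝕂, smul_smul, mul_inv_cancel₀ (Nat.cast_ne_zero.2 hn),
    one_smul]

theorem norm_inverse_one_sub_inv_smul_pow_sub_exp_le {𝕂 : Type*} [RCLike 𝕂] [NormedAlgebra 𝕂 A]
    (h1 : ‖(1 : A)‖ ≤ 1) (a : A) {n : ℕ} (hn : n ≠ 0) (ha : 2 * ‖a‖ ≤ n) :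
    ‖Ring.inverse (1 - (n : 𝕂)⁻¹ • a) ^ n - exp a‖ ≤ 2 * ‖a‖ ^ 2 * Real.exp (2 * ‖a‖) / n := by
  obtain ⟨m, rfl⟩ : ∃ m, n = m + 1 := ⟨n - 1, by omega⟩
  set b := ((m + 1 : ℕ) : 𝕂)⁻¹ • a
  have hm : (0 : ℝ) < (m + 1 : ℕ) := by positivity
  have hb : ‖b‖ = ‖a‖ / (m + 1 : ℕ) := by
    rw [norm_smul, norm_inv, RCLike.norm_natCast, div_eq_inv_mul]
  have hb2 : ‖b‖ ≤ 1 / 2 := by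
    rw [hb, div_le_iff₀ hm]; linarith
  have hb1 : ‖b‖ < 1 := by linarith
  have hexp : ‖exp b‖ ≤ Real.exp (2 * ‖b‖) :=
    (norm_exp_le_real_exp_norm 𝕂 h1 b).trans (Real.exp_le_exp.2 (by linarith [norm_nonneg b]))
  have hinv : ‖Ring.inverse (1 - b)‖ ≤ Real.exp (2 * ‖b‖) :=
    (norm_inverse_one_sub_le h1 hb1).trans (Real.inv_one_sub_le_exp_two_mul (norm_nonneg b) hb2)
  have hdiff : ‖exp b - Ring.inverse (1 - b)‖ ≤ 2 * ‖b‖ ^ 2 := by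
    refine (norm_exp_sub_inverse_one_sub_le 𝕂 hb1).trans ?_
    rw [mul_comm]
    gcongr
    rw [inv_le_comm₀ (by linarith) two_pos]
    linarith
  have hpow : Real.exp (2 * ‖b‖) ^ m ≤ Real.exp (2 * ‖a‖) := by
    rw [← Real.exp_nat_mul, Real.exp_le_exp, hb]
    calc (m : ℝ) * (2 * (‖a‖ / (m + 1 : ℕ))) ≤ (m + 1 : ℕ) * (2 * (‖a‖ / (m + 1 : ℕ))) := by
          gcongr; linarith
      _ = 2 * ‖a‖ := by field_simp
  calc ‖Ring.inverse (1 - b) ^ (m + 1) - exp a‖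
      = ‖exp b ^ (m + 1) - Ring.inverse (1 - b) ^ (m + 1)‖ := by
        rw [exp_eq_exp_inv_smul_pow 𝕂 a (m.succ_ne_zero), norm_sub_rev]
    _ ≤ (m + 1) * Real.exp (2 * ‖b‖) ^ m * ‖exp b - Ring.inverse (1 - b)‖ :=
        norm_pow_sub_pow_le hexp hinv m
    _ ≤ (m + 1) * Real.exp (2 * ‖a‖) * (2 * ‖b‖ ^ 2) := by gcongr
    _ = 2 * ‖a‖ ^ 2 * Real.exp (2 * ‖a‖) / (m + 1 : ℕ) := by
        rw [hb]; field_simp; push_cast; ring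

theorem tendsto_inverse_one_sub_inv_smul_pow_exp {𝕂 : Type*} [RCLike 𝕂] [NormedAlgebra 𝕂 A]
    (h1 : ‖(1 : A)‖ ≤ 1) (a : A) :
    Tendsto (fun n : ℕ => Ring.inverse (1 - (n : 𝕂)⁻¹ • a) ^ n) atTop (𝓝 (exp a)) := by
  rw [tendsto_iff_norm_sub_tendsto_zero]
  refine squeeze_zero' (Eventually.of_forall fun n => norm_nonneg _) ?_
    (tendsto_const_div_atTop_nhds_zero_nat (2 * ‖a‖ ^ 2 * Real.exp (2 * ‖a‖)))
  filter_upwards [eventually_ne_atTop 0,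
    (tendsto_natCast_atTop_atTop (R := ℝ)).eventually_ge_atTop (2 * ‖a‖)] with n hn ha
  exact norm_inverse_one_sub_inv_smul_pow_sub_exp_le h1 a hn ha

end CompleteNormedAlgebra

/-- If `T` is strongly Kreiss bounded on a complex Banach space `X` with constant `Ks`
(`‖(λ - T)⁻ⁿ‖ ≤ Ks/(|λ|-1)^n` for all `|λ| > 1` and `n ≥ 1`), then
`‖e^{ξT}‖ ≤ Ks·e^{|ξ|}` for all `ξ ∈ ℂ`. -/
theorem strongly_kreiss_exp_bound
    {X : Type*} [NormedAddCommGroup X] [NormedSpace ℂ X] [CompleteSpace X]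
    (T : X →L[ℂ] X) (Ks : ℝ)
    (hT : ∀ n : ℕ, 1 ≤ n → ∀ lam : ℂ, 1 < ‖lam‖ →
      IsUnit (lam • (1 : X →L[ℂ] X) - T) ∧
      ‖Ring.inverse (lam • (1 : X →L[ℂ] X) - T) ^ n‖ ≤ Ks / (‖lam‖ - 1) ^ n) :
    ∀ ξ : ℂ, ‖NormedSpace.exp (ξ • T)‖ ≤ Ks * Real.exp ‖ξ‖ := by
  have h1 : ‖(1 : X →L[ℂ] X)‖ ≤ 1 := ContinuousLinearMap.norm_id_le
  have hne : ∀ ξ : ℂ, ξ ≠ 0 → ‖exp (ξ • T)‖ ≤ Ks * Real.exp ‖ξ‖ := by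
    intro ξ hξ
    refine le_of_tendsto_of_tendsto
      (tendsto_inverse_one_sub_inv_smul_pow_exp (𝕂 := ℂ) h1 (ξ • T)).norm
      (Real.tendsto_div_one_sub_div_pow_mul_exp Ks ‖ξ‖) ?_
    filter_upwards [eventually_ge_atTop 1,
      (tendsto_natCast_atTop_atTop (R := ℝ)).eventually_gt_atTop ‖ξ‖] with n hn hξn
    have hlam : 1 < ‖(n : ℂ) / ξ‖ := by
      rw [norm_div, Complex.norm_natCast, one_lt_div (norm_pos_iff.2 hξ)]; exact hξn
    have hn0 : (n : ℂ) ≠ 0 := by exact_mod_cast (by omega : n ≠ 0)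
    have := norm_inverse_one_sub_inv_smul_pow_le (div_ne_zero hn0 hξ) (hT n hn _ hlam).2
    rw [inv_div, norm_div, Complex.norm_natCast, inv_div] at this
    rwa [smul_smul, ← div_eq_inv_mul]
  let +nondep : NormedAlgebra ℚ (X →L[ℂ] X) := NormedAlgebra.restrictScalars ℚ ℂ _
  have hclosed : IsClosed {ξ : ℂ | ‖exp (ξ • T)‖ ≤ Ks * Real.exp ‖ξ‖} :=
    isClosed_le (by fun_prop) (by fun_prop)
  intro ξ
  refine hclosed.closure_subset_iff.2 (fun ξ (hξ : ξ ∈ ({0}ᶜ : Set ℂ)) => hne ξ hξ) ?_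
  rw [(dense_compl_singleton (0 : ℂ)).closure_eq]
  trivial
end

section
/- If T is strongly Kreiss bounded on a Banach space X with constant K_s, then ‖T^n‖ ≤ K_s √(2π(n+1)) for all n ∈ ℕ. -/
/-!
For `‖z‖ < 1` the function `z ↦ (1 - z T)⁻¹ ^ (K + 1)` is holomorphic (the spectral radius of
`T` is at most `1`), and near `0` it is the binomial series `∑ₙ C(n + K, K) zⁿ Tⁿ`; convergence
near `0` is enough to identify the Taylor coefficients. Writing `(1 - z T)⁻¹ = z⁻¹ (z⁻¹ - T)⁻¹`,
the Kreiss bound gives `‖(1 - z T)⁻¹ ^ (K + 1)‖ ≤ Kₛ / (1 - ρ) ^ (K + 1)` on the circle `‖z‖ = ρ`,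
so Cauchy's estimate yields
`C(n + K, K) ‖Tⁿ‖ ≤ Kₛ / ((1 - ρ) ^ (K + 1) ρⁿ)`.
With `k = K + 1`, `ρ = n / (n + k)` and `C(n + K, K) ≥ kⁿ / n!` this becomes
`‖Tⁿ‖ ≤ Kₛ n! / nⁿ (1 + n / k) ^ (n + k)`, and letting `k → ∞` gives `‖Tⁿ‖ ≤ Kₛ n! eⁿ / nⁿ`.
Robbins' bound on the Stirling sequence turns `n! eⁿ / nⁿ` into at most `√(2π(n + 1))`.
-/

open Filter Metric Topology Real
open scoped NNReal ENNReal Nat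

section TaylorCoefficients

variable {𝕜 E : Type*} [RCLike 𝕜] [NormedAddCommGroup E] [NormedSpace 𝕜 E]

theorem hasFPowerSeriesAt_of_eventually_hasSum_pow_smul {f : 𝕜 → E} {a : ℕ → E}
    (hf : ∀ᶠ z in 𝓝 0, HasSum (fun n => z ^ n • a n) (f z)) :
    HasFPowerSeriesAt f (fun n => ContinuousMultilinearMap.mkPiRing 𝕜 (Fin n) (a n)) 0 := by
  obtain ⟨ε, hε, hball⟩ := Metric.eventually_nhds_iff.mp hf
  refine ⟨ENNReal.ofReal ε, ?_, ENNReal.ofReal_pos.mpr hε, fun {z} hz => ?_⟩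
  · refine ENNReal.le_of_forall_nnreal_lt fun s hs => ?_
    have hsε : (s : ℝ) < ε := by
      rwa [← ENNReal.ofReal_coe_nnreal, ENNReal.ofReal_lt_ofReal_iff hε] at hs
    refine FormalMultilinearSeries.le_radius_of_tendsto _ (l := 0) ?_
    have hs := (hball (y := ((s : ℝ) : 𝕜)) (by simpa using hsε)).summable.tendsto_atTop_zero.norm
    simpa [norm_smul, mul_comm] using hs
  · have hz' : dist z 0 < ε := by
      rwa [Metric.mem_eball, edist_dist, ENNReal.ofReal_lt_ofReal_iff hε] at hz
    simpa [ContinuousMultilinearMap.mkPiRing_apply] using hball hz'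

theorem HasFPowerSeriesAt.iteratedDeriv_eq_factorial_smul [CompleteSpace E] {f : 𝕜 → E}
    {a : ℕ → E} {x : 𝕜}
    (hf : HasFPowerSeriesAt f (fun n => ContinuousMultilinearMap.mkPiRing 𝕜 (Fin n) (a n)) x)
    (n : ℕ) : iteratedDeriv n f x = n ! • a n := by
  obtain ⟨r, hr⟩ := hf
  simpa [iteratedDeriv_eq_iteratedFDeriv, ContinuousMultilinearMap.mkPiRing_apply] using
    (hr.factorial_smul 1 n).symm

end TaylorCoefficients

theorem HasFPowerSeriesAt.norm_le_div_pow_of_forall_mem_sphere_norm_le {E : Type*}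
    [NormedAddCommGroup E] [NormedSpace ℂ E] [CompleteSpace E] {f : ℂ → E} {a : ℕ → E}
    (hf : HasFPowerSeriesAt f (fun n => ContinuousMultilinearMap.mkPiRing ℂ (Fin n) (a n)) 0)
    {ρ M : ℝ} (hρ : 0 < ρ) (hd : DiffContOnCl ℂ f (ball 0 ρ))
    (hM : ∀ z ∈ sphere (0 : ℂ) ρ, ‖f z‖ ≤ M) (n : ℕ) : ‖a n‖ ≤ M / ρ ^ n := by
  have h := Complex.norm_iteratedDeriv_le_of_forall_mem_sphere_norm_le n hρ hd hM
  rw [hf.iteratedDeriv_eq_factorial_smul, RCLike.norm_nsmul (K := ℂ), nsmul_eq_mul,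
    mul_div_assoc] at h
  exact le_of_mul_le_mul_left h (by positivity)

theorem Nat.pow_le_choose_mul_factorial (n K : ℕ) : (K + 1) ^ n ≤ (n + K).choose K * n ! := by
  have h := Nat.pow_sub_le_descFactorial (n + K) n
  rwa [Nat.descFactorial_eq_factorial_mul_choose, Nat.choose_symm_add, mul_comm,
    show n + K + 1 - n = K + 1 by omega] at h

theorem Real.tendsto_one_add_div_pow_add_exp (x : ℝ) (n : ℕ) :
    Tendsto (fun k : ℕ => (1 + x / k) ^ (n + k)) atTop (𝓝 (exp x)) := by
  have h := ((tendsto_const_div_atTop_nhds_zero_nat x).const_add 1).pow n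
  simpa [pow_add] using h.mul (Real.tendsto_one_add_div_pow_exp x)

namespace Stirling

theorem log_stirlingSeq_le {n : ℕ} (hn : n ≠ 0) :
    log (stirlingSeq n) ≤ log √π + 1 / (12 * n) := by
  obtain ⟨m, rfl⟩ : ∃ m, n = m + 1 := ⟨n - 1, by omega⟩
  set f : ℕ → ℝ := fun k => log (stirlingSeq (k + 1)) - 1 / (12 * (k + 1 : ℕ))
  have hf : Monotone f := by
    refine monotone_nat_of_le_succ fun k => ?_
    have h := log_stirlingSeq_sdiff_le (k + 1)
    have : (1 : ℝ) / (12 * ((k + 1 : ℕ) : ℝ) * ((k + 1 : ℕ) + 1)) =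
        1 / (12 * (k + 1 : ℕ)) - 1 / (12 * (k + 1 + 1 : ℕ)) := by
      push_cast; field_simp; ring
    simp only [f]
    linarith
  have hlim : Tendsto f atTop (𝓝 (log √π - 0)) := by
    refine ((continuousAt_log (by positivity)).tendsto.comp
      (tendsto_stirlingSeq_sqrt_pi.comp (tendsto_add_atTop_nat 1))).sub ?_
    have h := (tendsto_const_div_atTop_nhds_zero_nat (12⁻¹ : ℝ)).comp (tendsto_add_atTop_nat 1)
    refine h.congr fun k => ?_
    simp [div_eq_mul_inv, mul_comm]
  have := hf.ge_of_tendsto hlim m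
  simp only [f, sub_zero] at this
  linarith

theorem stirlingSeq_le {n : ℕ} (hn : n ≠ 0) : stirlingSeq n ≤ √π * exp (1 / (12 * n)) := by
  have hpos : 0 < stirlingSeq n := (sqrt_pos.mpr pi_pos).trans_le (sqrt_pi_le_stirlingSeq hn)
  calc stirlingSeq n = exp (log (stirlingSeq n)) := (exp_log hpos).symm
    _ ≤ exp (log √π + 1 / (12 * n)) := exp_le_exp.mpr (log_stirlingSeq_le hn)
    _ = √π * exp (1 / (12 * n)) := by rw [exp_add, exp_log (by positivity)]

theorem factorial_div_pow_mul_exp_le {n : ℕ} (hn : n ≠ 0) :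
    n ! / n ^ n * exp n ≤ √(2 * π * (n + 1)) := by
  have hn' : (0 : ℝ) < n := by positivity
  have hpos : 0 < stirlingSeq n := (sqrt_pos.mpr pi_pos).trans_le (sqrt_pi_le_stirlingSeq hn)
  have hs : n ! / n ^ n * exp n = stirlingSeq n * √(2 * n) := by
    rw [stirlingSeq, div_pow, exp_one_pow]
    field_simp
  have hexp : exp (1 / (6 * n)) ≤ (n + 1) / n := by
    have hx : n * (1 / (6 * n)) = (1 / 6 : ℝ) := by field_simp
    have hx1 : 1 / (6 * n) ≤ (1 / 6 : ℝ) := by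
      gcongr
      linarith [show (1 : ℝ) ≤ n by exact_mod_cast Nat.one_le_iff_ne_zero.mpr hn]
    refine (exp_bound_div_one_sub_of_interval (by positivity) (by linarith)).trans ?_
    rw [div_le_div_iff₀ (by linarith) hn']
    nlinarith
  have hsq : stirlingSeq n ^ 2 ≤ π * exp (1 / (6 * n)) := by
    calc stirlingSeq n ^ 2 ≤ (√π * exp (1 / (12 * n))) ^ 2 := by
          gcongr
          exact stirlingSeq_le hn
      _ = π * exp (1 / (6 * n)) := by
          rw [mul_pow, sq_sqrt pi_pos.le, ← exp_nat_mul]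
          congr 2
          field_simp
          norm_num
  rw [hs, le_sqrt (by positivity) (by positivity), mul_pow, sq_sqrt (by positivity)]
  calc stirlingSeq n ^ 2 * (2 * n) ≤ π * ((n + 1) / n) * (2 * n) := by
        gcongr
        exact hsq.trans (by gcongr)
    _ = 2 * π * (n + 1) := by field_simp

end Stirling

def IsStronglyKreissBounded {A : Type*} [NormedRing A] [NormedAlgebra ℂ A] (T : A) (Ks : ℝ) :
    Prop :=
  ∀ n : ℕ, 1 ≤ n → ∀ lam : ℂ, 1 < ‖lam‖ →
    IsUnit (lam • (1 : A) - T) ∧ ‖Ring.inverse (lam • (1 : A) - T) ^ n‖ ≤ Ks / (‖lam‖ - 1) ^ n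

section BanachAlgebra

variable {A : Type*} [NormedRing A] [NormedAlgebra ℂ A] {T : A}

theorem inverse_one_sub_smul_eq {z : ℂ} (hz : z ≠ 0) :
    Ring.inverse (1 - z • T) = z⁻¹ • Ring.inverse (z⁻¹ • (1 : A) - T) := by
  have h := spectrum.units_smul_resolvent_self (r := (Units.mk0 z hz)⁻¹) (a := T)
  simpa [resolvent, Algebra.algebraMap_eq_smul_one, Units.smul_def] using h.symm

theorem hasSum_pow_smul_choose_smul_pow [CompleteSpace A] {z : ℂ} (hz : ‖z • T‖ < 1) (K : ℕ) :
    HasSum (fun n => z ^ n • (((n + K).choose K : ℂ) • T ^ n))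
      (Ring.inverse (1 - z • T) ^ (K + 1)) := by
  convert hasSum_choose_mul_geometric_of_norm_lt_one' K hz using 2 with n
  rw [smul_pow, smul_comm, Nat.cast_smul_eq_nsmul ℂ, nsmul_eq_mul]

theorem hasFPowerSeriesAt_inverse_one_sub_smul_pow [CompleteSpace A] (K : ℕ) :
    HasFPowerSeriesAt (fun z : ℂ => Ring.inverse (1 - z • T) ^ (K + 1))
      (fun n => ContinuousMultilinearMap.mkPiRing ℂ (Fin n) (((n + K).choose K : ℂ) • T ^ n))
      0 := by
  refine hasFPowerSeriesAt_of_eventually_hasSum_pow_smul ?_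
  have h : Tendsto (fun z : ℂ => z • T) (𝓝 0) (𝓝 0) := by
    simpa using (tendsto_id (x := 𝓝 (0 : ℂ))).smul_const T
  filter_upwards [h.eventually (ball_mem_nhds 0 one_pos)] with z hz
  exact hasSum_pow_smul_choose_smul_pow (by simpa using hz) K

namespace IsStronglyKreissBounded

variable {Ks : ℝ} (hT : IsStronglyKreissBounded T Ks)
include hT

theorem nonneg : 0 ≤ Ks := by
  have h := (hT 1 le_rfl 2 (by norm_num)).2
  norm_num at h
  exact (norm_nonneg _).trans h

theorem spectralRadius_le_one : spectralRadius ℂ T ≤ 1 := by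
  refine iSup₂_le fun μ hμ => ?_
  by_contra! h
  refine spectrum.mem_iff.mp hμ ?_
  rw [Algebra.algebraMap_eq_smul_one]
  exact (hT 1 le_rfl μ (by exact_mod_cast h)).1

theorem norm_inverse_one_sub_smul_pow_le {z : ℂ} (hz0 : z ≠ 0) (hz1 : ‖z‖ < 1) (K : ℕ) :
    ‖Ring.inverse (1 - z • T) ^ (K + 1)‖ ≤ Ks / (1 - ‖z‖) ^ (K + 1) := by
  have hz : 0 < ‖z‖ := norm_pos_iff.mpr hz0
  have hlam : 1 < ‖z⁻¹‖ := by rw [norm_inv]; exact (one_lt_inv₀ hz).mpr hz1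
  have hK := (hT (K + 1) (by omega) z⁻¹ hlam).2
  rw [inverse_one_sub_smul_eq hz0, smul_pow, norm_smul, norm_pow]
  calc ‖z⁻¹‖ ^ (K + 1) * ‖Ring.inverse (z⁻¹ • (1 : A) - T) ^ (K + 1)‖
      ≤ ‖z⁻¹‖ ^ (K + 1) * (Ks / (‖z⁻¹‖ - 1) ^ (K + 1)) := by gcongr
    _ = Ks / (1 - ‖z‖) ^ (K + 1) := by
      have : 1 - ‖z‖ ≠ 0 := by linarith
      rw [norm_inv, show ‖z‖⁻¹ - 1 = (1 - ‖z‖) / ‖z‖ by field_simp, div_pow, inv_pow]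
      field_simp

variable [CompleteSpace A]

theorem choose_mul_norm_pow_le (n K : ℕ) {ρ : ℝ} (hρ0 : 0 < ρ) (hρ1 : ρ < 1) :
    (n + K).choose K * ‖T ^ n‖ ≤ Ks / ((1 - ρ) ^ (K + 1) * ρ ^ n) := by
  have hρ : ((ρ.toNNReal : ℝ≥0) : ℝ≥0∞) < (spectralRadius ℂ T)⁻¹ := by
    refine lt_of_lt_of_le ?_ (ENNReal.one_le_inv.mpr hT.spectralRadius_le_one)
    simpa using hρ1
  have hd : DiffContOnCl ℂ (fun z : ℂ => Ring.inverse (1 - z • T) ^ (K + 1)) (ball 0 ρ) :=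
    ((spectrum.differentiableOn_inverse_one_sub_smul hρ).pow (K + 1)).diffContOnCl_ball
      (by simp [hρ0.le])
  have hM : ∀ z ∈ sphere (0 : ℂ) ρ,
      ‖Ring.inverse (1 - z • T) ^ (K + 1)‖ ≤ Ks / (1 - ρ) ^ (K + 1) := by
    intro z hz
    rw [mem_sphere_zero_iff_norm] at hz
    subst hz
    exact hT.norm_inverse_one_sub_smul_pow_le (norm_pos_iff.mp hρ0) hρ1 K
  have h := (hasFPowerSeriesAt_inverse_one_sub_smul_pow K)
    |>.norm_le_div_pow_of_forall_mem_sphere_norm_le hρ0 hd hM n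
  rwa [norm_smul, RCLike.norm_natCast, div_div] at h

theorem norm_pow_le_mul_one_add_div_pow {n k : ℕ} (hn : n ≠ 0) (hk : k ≠ 0) :
    ‖T ^ n‖ ≤ Ks * (n ! / n ^ n * (1 + n / k) ^ (n + k)) := by
  obtain ⟨K, rfl⟩ : ∃ K, k = K + 1 := ⟨k - 1, by omega⟩
  have hk' : (0 : ℝ) < (K + 1 : ℕ) := by positivity
  have hC : ((K + 1 : ℕ) : ℝ) ^ n / n ! ≤ (n + K).choose K := by
    rw [div_le_iff₀ (by positivity)]
    exact_mod_cast Nat.pow_le_choose_mul_factorial n K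
  have h := hT.choose_mul_norm_pow_le n K (ρ := n / (n + (K + 1 : ℕ))) (by positivity)
    (by rw [div_lt_one (by positivity)]; linarith)
  generalize ((K + 1 : ℕ) : ℝ) = k at hk' hC h ⊢
  rw [show 1 - n / (n + k) = k / (n + k) by field_simp; ring, mul_comm,
    ← le_div_iff₀ (hC.trans_lt' (by positivity)), div_div] at h
  calc ‖T ^ n‖ ≤ Ks / ((k / (n + k)) ^ (K + 1) * (n / (n + k)) ^ n * (n + K).choose K) := h
    _ ≤ Ks / ((k / (n + k)) ^ (K + 1) * (n / (n + k)) ^ n * (k ^ n / n !)) := by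
        gcongr
        exact hT.nonneg
    _ = Ks * (n ! / n ^ n * (1 + n / k) ^ (n + (K + 1))) := by
        rw [one_add_div hk'.ne', add_comm k, div_pow, div_pow, div_pow, pow_add, pow_add]
        field_simp
        ring

theorem norm_pow_le_factorial_div_pow_mul_exp {n : ℕ} (hn : n ≠ 0) :
    ‖T ^ n‖ ≤ Ks * (n ! / n ^ n * exp n) :=
  ge_of_tendsto (((Real.tendsto_one_add_div_pow_add_exp n n).const_mul _).const_mul Ks)
    ((eventually_ne_atTop 0).mono fun _ hk => hT.norm_pow_le_mul_one_add_div_pow hn hk)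

end IsStronglyKreissBounded

end BanachAlgebra

/-- If `T` is strongly Kreiss bounded on a complex Banach space `X` with constant `Ks`,
then `‖T^n‖ ≤ Ks·√(2π(n+1))` for all `n : ℕ`. -/
theorem strongly_kreiss_sqrt_growth
    {X : Type*} [NormedAddCommGroup X] [NormedSpace ℂ X] [CompleteSpace X]
    (T : X →L[ℂ] X) (Ks : ℝ)
    (hT : ∀ n : ℕ, 1 ≤ n → ∀ lam : ℂ, 1 < ‖lam‖ →
      IsUnit (lam • (1 : X →L[ℂ] X) - T) ∧
      ‖Ring.inverse (lam • (1 : X →L[ℂ] X) - T) ^ n‖ ≤ Ks / (‖lam‖ - 1) ^ n) :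
    ∀ n : ℕ, ‖T ^ n‖ ≤ Ks * Real.sqrt (2 * Real.pi * (n + 1)) := by
  have hK : IsStronglyKreissBounded T Ks := hT
  intro n
  rcases eq_or_ne n 0 with rfl | hn
  · have h := hK.choose_mul_norm_pow_le 0 0 (ρ := 1 / 2) (by norm_num) (by norm_num)
    have hsqrt : (2 : ℝ) ≤ √(2 * π * ((0 : ℕ) + 1)) :=
      (le_sqrt zero_le_two (by positivity)).mpr (by nlinarith [pi_gt_three])
    calc ‖T ^ 0‖ ≤ Ks * 2 := by norm_num [div_div_eq_mul_div] at h; exact h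
      _ ≤ Ks * √(2 * π * ((0 : ℕ) + 1)) := by
        gcongr
        exact hK.nonneg
  · calc ‖T ^ n‖ ≤ Ks * (n ! / n ^ n * exp n) := hK.norm_pow_le_factorial_div_pow_mul_exp hn
      _ ≤ Ks * √(2 * π * (n + 1)) := by
        gcongr
        exacts [hK.nonneg, Stirling.factorial_div_pow_mul_exp_le hn]
end

section
/- For every integer n ≥ 100 and every real x ∈ [0, 2√n], one has e^x (1 - x/n)^{n - x} ≤ e^{20/9}. -/
/-!
Taking logarithms, the claim is `x + (n - x) log (1 - x/n) ≤ 20/9`. The Padé bound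
`log (1 - t) ≤ -2t/(2 - t)` turns the left side into at most `x² / (2n - x)`, and for
`x ≤ 2s` with `s = √n ≥ 10` this is at most `4s² / (2s² - 2s) = 2 / (1 - 1/s) ≤ 20/9`.
-/

open Real

lemma log_one_sub_le_neg_two_mul_div {t : ℝ} (h0 : 0 ≤ t) (h1 : t < 1) :
    log (1 - t) ≤ -(2 * t) / (2 - t) := by
  have h1t : 0 < 1 - t := by linarith
  -- `1 - t = (1 + u)⁻¹` with `u = t / (1 - t)`, and `2u / (u + 2) = 2t / (2 - t)`.
  have hlog := le_log_one_add_of_nonneg (div_nonneg h0 h1t.le)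
  have hinv : 1 + t / (1 - t) = (1 - t)⁻¹ := by field_simp; ring
  have hfrac : 2 * (t / (1 - t)) / (t / (1 - t) + 2) = 2 * t / (2 - t) := by
    have : (2 : ℝ) - t ≠ 0 := by linarith
    field_simp
    ring
  rw [hinv, log_inv, hfrac] at hlog
  rw [neg_div]
  linarith

lemma add_mul_log_one_sub_div_le {n x : ℝ} (hx0 : 0 ≤ x) (hxn : x < n) :
    x + (n - x) * log (1 - x / n) ≤ x ^ 2 / (2 * n - x) := by
  have hn : 0 < n := hx0.trans_lt hxn
  have hlog := log_one_sub_le_neg_two_mul_div (div_nonneg hx0 hn.le) ((div_lt_one hn).2 hxn)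
  have hpade : -(2 * (x / n)) / (2 - x / n) = -(2 * x) / (2 * n - x) := by
    have : 2 * n - x ≠ 0 := by linarith
    field_simp
  rw [hpade] at hlog
  calc x + (n - x) * log (1 - x / n)
      ≤ x + (n - x) * (-(2 * x) / (2 * n - x)) := by gcongr
    _ = x ^ 2 / (2 * n - x) := by
      rw [eq_div_iff (by linarith), add_mul, mul_assoc, div_mul_cancel₀ _ (by linarith)]
      ring

lemma sq_div_two_mul_sq_sub_le {s x : ℝ} (hs : 10 ≤ s) (hx0 : 0 ≤ x) (hx : x ≤ 2 * s) :
    x ^ 2 / (2 * s ^ 2 - x) ≤ 20 / 9 := by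
  rw [div_le_iff₀ (by nlinarith)]
  nlinarith

/-- For every integer `n ≥ 100` and every real `x ∈ [0, 2√n]`,
`e^x (1 - x/n)^{n - x} ≤ e^{20/9}`. -/
theorem exp_mul_rpow_le (n : ℕ) (hn : 100 ≤ n) (x : ℝ) (hx0 : 0 ≤ x)
    (hx : x ≤ 2 * Real.sqrt n) :
    Real.exp x * (1 - x / n) ^ ((n : ℝ) - x) ≤ Real.exp (20 / 9) := by
  have hsq : √(n : ℝ) ^ 2 = n := sq_sqrt (Nat.cast_nonneg n)
  have hs : 10 ≤ √(n : ℝ) := le_sqrt_of_sq_le (by norm_num; exact_mod_cast hn)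
  have hxn : x < n := by nlinarith
  have hbase : 0 < 1 - x / n := sub_pos.2 ((div_lt_one (hx0.trans_lt hxn)).2 hxn)
  rw [rpow_def_of_pos hbase, ← exp_add, exp_le_exp]
  calc x + log (1 - x / n) * (n - x) = x + (n - x) * log (1 - x / n) := by ring
    _ ≤ x ^ 2 / (2 * n - x) := add_mul_log_one_sub_div_le hx0 hxn
    _ = x ^ 2 / (2 * √(n : ℝ) ^ 2 - x) := by rw [hsq]
    _ ≤ 20 / 9 := sq_div_two_mul_sq_sub_le hs hx0 hx
end

section
/- For n ≥ 2 and integers m with n - √n ≤ m ≤ n, let b_{n,m} := Σ_{m-√n ≤ k ≤ m-1} n^k/k! and a_{n,m} := e^n / b_{n,m} (and a_{n,m} := 0 for other m). Then sup_m |a_{n,m}| ≤ 32. -/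
/-!
Write `t = ⌊√n⌋`. For `n - √n ≤ m ≤ n` the sum `b_{n,m}` has exactly `t` terms, all with indices
in `[n - 2t, n - 1]`; as `k ↦ n^k / k!` increases for `k ≤ n`, `b_{n,m} ≥ t · n^(n-2t) / (n-2t)!`.
So it suffices that `e^n (n-2t)! ≤ 32 t n^(n-2t)`. Writing `n! = (n-2t)! · n(n-1)⋯(n-2t+1)`, the
upper Stirling bound `n! ≤ e √n (n/e)^n` together with `n - u ≥ n e^(-u/(n-2t+1))` gives
`e^n (n-2t)! ≤ e^(1+E) √n n^(n-2t)` with `E = t(2t-1)/(n-2t+1)`. For `t ≥ 11` we have `E ≤ 7/3`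
and `e^(10/3) (t+1) ≤ 32 t`; the cases `n < 121` are checked by computation, using `e < 68/25`.
-/

open scoped BigOperators

/-- `b n m = Σ_{m - √n ≤ k ≤ m - 1} n^k / k!`. -/
noncomputable def kreissB (n : ℕ) (m : ℤ) : ℝ :=
  ∑ k ∈ Finset.Icc ⌈(m : ℝ) - Real.sqrt n⌉ (m - 1), (n : ℝ) ^ k.toNat / (Nat.factorial k.toNat)

/-- `a n m = e^n / b n m` for `n - √n ≤ m ≤ n`, and `0` otherwise. -/
noncomputable def kreissA (n : ℕ) (m : ℤ) : ℝ :=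
  if (n : ℝ) - Real.sqrt n ≤ (m : ℝ) ∧ (m : ℝ) ≤ (n : ℝ) then Real.exp n / kreissB n m else 0

open Real Nat Finset

lemma exp_one_le_68_div_25 : exp 1 ≤ 68 / 25 :=
  exp_one_lt_d9.le.trans (by norm_num)

lemma exp_natCast_le_68_div_25_pow (n : ℕ) : exp n ≤ (68 / 25) ^ n := by
  rw [← exp_one_pow]
  exact pow_le_pow_left₀ (exp_pos 1).le exp_one_le_68_div_25 n

lemma exp_ten_div_three_le : exp (10 / 3) ≤ 88 / 3 := by
  refine le_of_pow_le_pow_left₀ three_ne_zero (by norm_num) ?_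
  calc exp (10 / 3) ^ 3 = exp (10 : ℕ) := by rw [← exp_nat_mul]; norm_num
    _ ≤ (68 / 25) ^ 10 := exp_natCast_le_68_div_25_pow 10
    _ ≤ (88 / 3) ^ 3 := by norm_num

lemma factorial_le_exp_one_mul_sqrt_mul_pow {n : ℕ} (hn : n ≠ 0) :
    (n ! : ℝ) ≤ exp 1 * √n * (n / exp 1) ^ n := by
  obtain ⟨k, rfl⟩ := exists_eq_succ_of_ne_zero hn
  have h : Stirling.stirlingSeq (k + 1) ≤ exp 1 / √2 :=
    Stirling.stirlingSeq_one ▸ Stirling.stirlingSeq'_antitone (Nat.zero_le k)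
  rw [Stirling.stirlingSeq, div_le_iff₀ (by positivity), sqrt_mul zero_le_two] at h
  exact h.trans_eq (by field_simp)

lemma le_exp_div_mul_sub {x u s : ℝ} (hs : 0 < s) (hu : 0 ≤ u) (hx : u + s ≤ x) :
    x ≤ exp (u / s) * (x - u) := by
  have hlin : x ≤ (u / s + 1) * (x - u) := by
    rw [div_add_one hs.ne', div_mul_eq_mul_div, le_div_iff₀ hs]
    nlinarith
  exact hlin.trans (mul_le_mul_of_nonneg_right (add_one_le_exp _) (by linarith))

lemma pow_le_exp_mul_descFactorial {n d : ℕ} (hd : d ≤ n) :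
    (n : ℝ) ^ d ≤ exp (d * (d - 1) / 2 / (n - d + 1)) * n.descFactorial d := by
  have hs : (0 : ℝ) < n - d + 1 := by
    have : (d : ℝ) ≤ n := by exact_mod_cast hd
    linarith
  have hsum : ∑ u ∈ range d, (u : ℝ) = d * (d - 1) / 2 := by
    have := congrArg (Nat.cast (R := ℝ)) (sum_range_id_mul_two d)
    rcases d with _ | d
    · simp
    · push_cast at this ⊢; linarith
  calc (n : ℝ) ^ d = ∏ u ∈ range d, (n : ℝ) := by simp
    _ ≤ ∏ u ∈ range d, (exp (u / (n - d + 1)) * (n - u)) := by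
      refine prod_le_prod (fun _ _ => by positivity) fun u hu =>
        le_exp_div_mul_sub hs u.cast_nonneg ?_
      have : (u : ℝ) + 1 ≤ d := by exact_mod_cast mem_range.mp hu
      linarith
    _ = exp (d * (d - 1) / 2 / (n - d + 1)) * n.descFactorial d := by
      rw [prod_mul_distrib, ← exp_sum, ← sum_div, hsum, descFactorial_eq_prod_range, cast_prod]
      congr 1
      refine prod_congr rfl fun u hu => ?_
      rw [cast_sub (by have := mem_range.mp hu; omega)]

lemma pow_div_factorial_le_pow_div_factorial {x : ℝ} {a b : ℕ} (hab : a ≤ b)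
    (hbx : (b : ℝ) ≤ x) :
    x ^ a / a ! ≤ x ^ b / b ! := by
  induction b, hab using Nat.le_induction with
  | base => rfl
  | succ b _ ih =>
    push_cast at hbx
    have hx : 0 ≤ x := by linarith [b.cast_nonneg (α := ℝ)]
    calc x ^ a / a ! ≤ x ^ b / b ! := ih (by linarith)
      _ ≤ x ^ b / b ! * (x / (b + 1)) :=
        le_mul_of_one_le_right (by positivity) ((one_le_div (by positivity)).mpr hbx)
      _ = x ^ (b + 1) / (b + 1)! := by push_cast [pow_succ, factorial_succ]; field_simp

lemma ceil_intCast_sub_sqrt (n : ℕ) (m : ℤ) : ⌈(m : ℝ) - √n⌉ = m - n.sqrt := by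
  rw [sub_eq_neg_add, Int.ceil_add_intCast, Int.ceil_neg, Real.floor_real_sqrt_eq_nat_sqrt]
  ring

lemma sqrt_mul_pow_div_factorial_le_kreissB {n : ℕ} {m : ℤ} (hm : (n : ℝ) - √n ≤ m)
    (hmn : (m : ℝ) ≤ n) :
    n.sqrt * ((n : ℝ) ^ (n - 2 * n.sqrt) / (n - 2 * n.sqrt)!) ≤ kreissB n m := by
  have hmn : m ≤ n := by exact_mod_cast hmn
  have hm : (n : ℤ) - n.sqrt ≤ m := by
    have : ((n - n.sqrt - 1 : ℤ) : ℝ) < m := by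
      push_cast; linarith [Real.real_sqrt_lt_nat_sqrt_succ (a := n)]
    have := Int.cast_lt.mp this
    omega
  rw [kreissB, ceil_intCast_sub_sqrt]
  calc (n.sqrt : ℝ) * ((n : ℝ) ^ (n - 2 * n.sqrt) / (n - 2 * n.sqrt)!)
      = ∑ _k ∈ Icc (m - n.sqrt) (m - 1), (n : ℝ) ^ (n - 2 * n.sqrt) / (n - 2 * n.sqrt)! := by
        rw [sum_const, Int.card_Icc, nsmul_eq_mul]; congr; omega
    _ ≤ _ := sum_le_sum fun k hk => by
        rw [mem_Icc] at hk
        exact pow_div_factorial_le_pow_div_factorial (by omega)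
          (by exact_mod_cast (by omega : k.toNat ≤ n))

lemma exp_mul_factorial_sub_le {n d : ℕ} (hn : n ≠ 0) (hd : d ≤ n) :
    exp n * (n - d)! ≤ exp (1 + d * (d - 1) / 2 / (n - d + 1)) * √n * n ^ (n - d) := by
  have hdesc : (0 : ℝ) < n.descFactorial d := by exact_mod_cast descFactorial_pos.mpr hd
  refine le_of_mul_le_mul_right ?_ hdesc
  calc exp n * (n - d)! * n.descFactorial d = exp n * n ! := by
        rw [mul_assoc, ← cast_mul, factorial_mul_descFactorial hd]
    _ ≤ exp n * (exp 1 * √n * (n / exp 1) ^ n) := by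
        gcongr; exact factorial_le_exp_one_mul_sqrt_mul_pow hn
    _ = exp 1 * √n * n ^ n := by rw [div_pow, exp_one_pow]; field_simp
    _ = exp 1 * √n * n ^ (n - d) * n ^ d := by
        rw [mul_assoc _ ((n : ℝ) ^ (n - d)), ← pow_add, Nat.sub_add_cancel hd]
    _ ≤ exp 1 * √n * n ^ (n - d) * (exp (d * (d - 1) / 2 / (n - d + 1)) * n.descFactorial d) :=
        by gcongr; exact pow_le_exp_mul_descFactorial hd
    _ = _ := by rw [exp_add]; ring

lemma exp_mul_factorial_sub_two_sqrt_le_of_le {n : ℕ} (h : 11 ≤ n.sqrt) :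
    exp n * (n - 2 * n.sqrt)! ≤ 32 * n.sqrt * n ^ (n - 2 * n.sqrt) := by
  set t := n.sqrt
  have ht : (11 : ℝ) ≤ t := by exact_mod_cast h
  have htn : (t : ℝ) * t ≤ n := by exact_mod_cast sqrt_le n
  have hd : 2 * t ≤ n := by nlinarith [sqrt_le n]
  have hE : ((2 * t : ℕ) : ℝ) * ((2 * t : ℕ) - 1) / 2 / (n - (2 * t : ℕ) + 1) ≤ 7 / 3 := by
    have hs : (0 : ℝ) < n - (2 * t : ℕ) + 1 := by push_cast; nlinarith
    rw [div_le_iff₀ hs]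
    push_cast
    nlinarith
  calc exp n * (n - 2 * t)! ≤ _ := exp_mul_factorial_sub_le (by omega) hd
    _ ≤ 88 / 3 * (t + 1) * n ^ (n - 2 * t) := by
        gcongr
        · exact (exp_le_exp.mpr (by linarith)).trans exp_ten_div_three_le
        · exact Real.real_sqrt_lt_nat_sqrt_succ.le
    _ ≤ 32 * t * n ^ (n - 2 * t) := by gcongr ?_ * _; linarith

lemma exp_mul_factorial_sub_two_sqrt_le_of_lt {n : ℕ} (hn : 2 ≤ n) (h : n < 121) :
    exp n * (n - 2 * n.sqrt)! ≤ 32 * n.sqrt * n ^ (n - 2 * n.sqrt) := by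
  -- `Nat.sqrt` does not reduce in the kernel, so `decide` gets it as `t` with `t² ≤ n < (t+1)²`.
  have hnat : 68 ^ n * (n - 2 * n.sqrt)! ≤ 32 * n.sqrt * n ^ (n - 2 * n.sqrt) * 25 ^ n :=
    (by decide : ∀ n < 121, ∀ t < 11, t * t ≤ n → n < (t + 1) * (t + 1) → 2 ≤ n →
      68 ^ n * (n - 2 * t)! ≤ 32 * t * n ^ (n - 2 * t) * 25 ^ n)
      n h n.sqrt (sqrt_lt'.mpr h) (sqrt_le n) (lt_succ_sqrt n) hn
  calc exp n * (n - 2 * n.sqrt)! ≤ (68 / 25) ^ n * (n - 2 * n.sqrt)! := by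
        gcongr; exact exp_natCast_le_68_div_25_pow n
    _ ≤ 32 * n.sqrt * n ^ (n - 2 * n.sqrt) := by
        rw [div_pow, div_mul_eq_mul_div, div_le_iff₀ (by positivity)]
        exact_mod_cast hnat

lemma exp_mul_factorial_sub_two_sqrt_le {n : ℕ} (hn : 2 ≤ n) :
    exp n * (n - 2 * n.sqrt)! ≤ 32 * n.sqrt * n ^ (n - 2 * n.sqrt) := by
  rcases lt_or_ge n 121 with h | h
  · exact exp_mul_factorial_sub_two_sqrt_le_of_lt hn h
  · exact exp_mul_factorial_sub_two_sqrt_le_of_le (le_sqrt'.mpr h)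

/-- For `n ≥ 2`, the sequence `(a_{n,m})_{m ∈ ℤ}` is uniformly bounded by `32`. -/
theorem kreissA_bounded (n : ℕ) (hn : 2 ≤ n) : ∀ m : ℤ, |kreissA n m| ≤ 32 := by
  intro m
  unfold kreissA
  split_ifs with hm
  · have hB := sqrt_mul_pow_div_factorial_le_kreissB hm.1 hm.2
    have hexp : exp n ≤ 32 * (n.sqrt * ((n : ℝ) ^ (n - 2 * n.sqrt) / (n - 2 * n.sqrt)!)) := by
      rw [← mul_div_assoc, ← mul_div_assoc, le_div_iff₀ (by positivity), ← mul_assoc]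
      exact exp_mul_factorial_sub_two_sqrt_le hn
    have hBpos : 0 < kreissB n m := by linarith [exp_pos n]
    rw [abs_of_pos (div_pos (exp_pos n) hBpos), div_le_iff₀ hBpos]
    linarith
  · simp
end

section
/- Let X be a Banach space, p ∈ [1,∞], 1 ≤ s < q < ∞ ≥ r with r ∈ (q,∞], and suppose there is U > 0 such that for every finite family 𝓘 of disjoint intervals and every trigonometric polynomial f with Fourier support in ⋃𝓘, ‖f‖_{L^p(𝕋;X)} ≤ U (#𝓘)^{1/q - 1/r}(Σ_{I∈𝓘}‖D_I f‖^r_{L^p})^{1/r}. Then X has upper ℓ^s(L^p)-decompositions: there is a constant C (depending on U, q, s) such that for every interval partition 𝓘 and polynomial f, ‖f‖_{L^p(𝕋;X)} ≤ C (Σ_{I∈𝓘}‖D_I f‖^s_{L^p})^{1/s}. -/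
open MeasureTheory Set
open scoped ENNReal BigOperators

noncomputable section

instance : Fact ((0:ℝ) < 1) := ⟨one_pos⟩

/-- The `X`-valued trigonometric polynomial on the circle `𝕋 = ℝ/ℤ` with Fourier coefficients
`c`, keeping only the frequencies in `I ⊆ ℤ`. For `I = univ` this is the polynomial itself,
and in general it is the Fourier projection `D_I f`. -/
def fourierProj {X : Type*} [NormedAddCommGroup X] [NormedSpace ℂ X]
    (I : Set ℤ) (c : ℤ →₀ X) : AddCircle (1:ℝ) → X :=
  fun t => ∑ n ∈ c.support, I.indicator (fun m => (fourier m t) • c m) n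

/-- The `L^p(𝕋;X)` norm (w.r.t. the normalized Haar measure on the circle). -/
def tpNorm {X : Type*} [NormedAddCommGroup X] (p : ℝ≥0∞) (f : AddCircle (1:ℝ) → X) : ℝ :=
  (eLpNorm f p AddCircle.haarAddCircle).toReal

/-!
Write `f = ∑ D_I f` over the finitely many intervals `I` of the partition that meet the Fourier
support of `f`, and regard the pieces as vectors of `L^p(𝕋; X)`. Group the intervals by the
dyadic size `2^k ≤ ‖D_I f‖ < 2^(k+1)`. A level with `n_k` intervals has
`n_k 2^(ks) ≤ Λ := ∑ ‖D_I f‖^s`, so the growth hypothesis bounds its contribution by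
`2 U Λ^(1/q) 2^(k(1 - s/q))`. As `s < q`, these bounds form a geometric series in `k`, dominated
by the top level, where `2^k ≤ Λ^(1/s)`; this gives `‖f‖ ≤ C Λ^(1/s)`.
-/

theorem sum_zpow_le_of_forall_le {x : ℝ} (hx : 1 < x) {K : Finset ℤ} {m : ℤ}
    (hK : ∀ k ∈ K, k ≤ m) : ∑ k ∈ K, x ^ k ≤ x ^ m * (1 - x⁻¹)⁻¹ := by
  have hx0 : 0 < x := zero_lt_one.trans hx
  have hterm : ∀ k ∈ K, x ^ k = x ^ m * x⁻¹ ^ (m - k).toNat := by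
    intro k hk
    rw [inv_pow, ← zpow_natCast, Int.toNat_of_nonneg (sub_nonneg.2 (hK k hk)), zpow_sub₀ hx0.ne']
    field_simp
  have hinj : Set.InjOn (fun k => (m - k).toNat) K := fun k hk l hl h => by
    have := hK k hk
    have := hK l hl
    simp only at h
    omega
  have hρ0 : 0 ≤ x⁻¹ := inv_nonneg.2 hx0.le
  have hρ1 : x⁻¹ < 1 := inv_lt_one_of_one_lt₀ hx
  rw [Finset.sum_congr rfl hterm, ← Finset.mul_sum, ← Finset.sum_image hinj,
    ← tsum_geometric_of_lt_one hρ0 hρ1]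
  gcongr
  exact (summable_geometric_of_lt_one hρ0 hρ1).sum_le_tsum _ fun n _ => pow_nonneg hρ0 n

theorem mem_Icc_zpow_log_two {a : ℝ} (ha : 0 < a) :
    a ∈ Set.Icc ((2:ℝ) ^ Int.log 2 a) (2 * 2 ^ Int.log 2 a) := by
  refine ⟨Int.zpow_log_le_self one_lt_two ha, ?_⟩
  have := Int.lt_zpow_succ_log_self (R := ℝ) one_lt_two a
  rw [Nat.cast_ofNat, zpow_add_one₀ two_ne_zero] at this
  linarith

section GrowthDecomposition

variable {ι E : Type*} [NormedAddCommGroup E]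

theorem norm_sum_le_of_norm_mem_Icc {s q r U b Λ : ℝ} (hs : 0 ≤ s) (hq : 0 ≤ q) (hr : 0 < r)
    (hU : 0 ≤ U) (hb : 0 < b) {v : ι → E} {A : Finset ι}
    (hgrowth : ‖∑ i ∈ A, v i‖ ≤ U * (A.card : ℝ) ^ (1/q - 1/r) * (∑ i ∈ A, ‖v i‖ ^ r) ^ (1/r))
    (hv : ∀ i ∈ A, ‖v i‖ ∈ Set.Icc b (2 * b)) (hΛ : ∑ i ∈ A, ‖v i‖ ^ s ≤ Λ) :
    ‖∑ i ∈ A, v i‖ ≤ 2 * U * Λ ^ (1/q) * b ^ (1 - s/q) := by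
  rcases A.eq_empty_or_nonempty with rfl | hA
  · simp only [Finset.sum_empty, norm_zero] at hΛ ⊢
    positivity
  set n : ℝ := (A.card : ℝ)
  have hn : 0 < n := Nat.cast_pos.2 hA.card_pos
  have h_r : (∑ i ∈ A, ‖v i‖ ^ r) ^ (1/r) ≤ n ^ (1/r) * (2 * b) := by
    have hsum : ∑ i ∈ A, ‖v i‖ ^ r ≤ n * (2 * b) ^ r := by
      simpa using A.sum_le_card_nsmul _ _ fun i hi =>
        Real.rpow_le_rpow (norm_nonneg _) (hv i hi).2 hr.le
    calc (∑ i ∈ A, ‖v i‖ ^ r) ^ (1/r) ≤ (n * (2 * b) ^ r) ^ (1/r) := by gcongr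
      _ = n ^ (1/r) * (2 * b) := by
        rw [Real.mul_rpow hn.le (by positivity), ← Real.rpow_mul (by positivity),
          mul_one_div_cancel hr.ne', Real.rpow_one]
  have h_s : n * b ^ s ≤ Λ := by
    refine le_trans ?_ hΛ
    simpa using A.card_nsmul_le_sum _ _ fun i hi => Real.rpow_le_rpow hb.le (hv i hi).1 hs
  have h_card : n ^ (1/q) * b ^ (s/q) ≤ Λ ^ (1/q) := by
    calc n ^ (1/q) * b ^ (s/q) = (n * b ^ s) ^ (1/q) := by
          rw [Real.mul_rpow hn.le (by positivity), ← Real.rpow_mul hb.le, mul_one_div]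
      _ ≤ Λ ^ (1/q) := by gcongr
  calc ‖∑ i ∈ A, v i‖ ≤ U * n ^ (1/q - 1/r) * (n ^ (1/r) * (2 * b)) := by
        refine hgrowth.trans ?_
        gcongr
    _ = 2 * U * (n ^ (1/q) * b ^ (s/q)) * b ^ (1 - s/q) := by
        have hn' : n ^ (1/q - 1/r) * n ^ (1/r) = n ^ (1/q) := by
          rw [← Real.rpow_add hn, sub_add_cancel]
        have hb' : b ^ (s/q) * b ^ (1 - s/q) = b := by
          rw [← Real.rpow_add hb, add_sub_cancel, Real.rpow_one]
        linear_combination (2 * U * b) * hn' - (2 * U * n ^ (1/q)) * hb'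
    _ ≤ 2 * U * Λ ^ (1/q) * b ^ (1 - s/q) := by gcongr

theorem norm_sum_le_of_growth {s q r U : ℝ} (hs : 0 < s) (hsq : s < q) (hr : 0 < r)
    (hU : 0 ≤ U) {v : ι → E} {S : Finset ι}
    (hgrowth : ∀ A ⊆ S,
      ‖∑ i ∈ A, v i‖ ≤ U * (A.card : ℝ) ^ (1/q - 1/r) * (∑ i ∈ A, ‖v i‖ ^ r) ^ (1/r)) :
    ‖∑ i ∈ S, v i‖ ≤ 2 * U * (1 - 2 ^ (s/q - 1))⁻¹ * (∑ i ∈ S, ‖v i‖ ^ s) ^ (1/s) := by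
  classical
  have hq : 0 < q := hs.trans hsq
  set Λ := ∑ i ∈ S, ‖v i‖ ^ s
  set x : ℝ := 2 ^ (1 - s/q)
  have hx : 1 < x := Real.one_lt_rpow one_lt_two (by rw [sub_pos, div_lt_one hq]; exact hsq)
  have hx_inv : x⁻¹ = 2 ^ (s/q - 1) := by rw [← Real.rpow_neg zero_le_two, neg_sub]
  have hC : 0 ≤ (1 - x⁻¹)⁻¹ := inv_nonneg.2 (sub_nonneg.2 (inv_le_one_of_one_le₀ hx.le))
  rw [← hx_inv, ← Finset.sum_filter_ne_zero]
  set T := S.filter (v · ≠ 0)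
  rcases T.eq_empty_or_nonempty with hT | ⟨i₀, hi₀⟩
  · rw [hT, Finset.sum_empty, norm_zero]
    positivity
  have hterm_le : ∀ i ∈ S, ‖v i‖ ^ s ≤ Λ :=
    fun i hi => Finset.single_le_sum (f := fun i => ‖v i‖ ^ s) (fun j _ => by positivity) hi
  have hnorm_le : ∀ i ∈ S, ‖v i‖ ≤ Λ ^ (1/s) := fun i hi => by
    rw [← Real.rpow_rpow_inv (norm_nonneg (v i)) hs.ne', one_div]
    gcongr
    exact hterm_le i hi
  obtain ⟨hi₀S, hvi₀⟩ := Finset.mem_filter.1 hi₀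
  have hΛ : 0 < Λ :=
    (Real.rpow_pos_of_pos (norm_pos_iff.2 hvi₀) s).trans_le (hterm_le i₀ hi₀S)
  set level : ι → ℤ := fun i => Int.log 2 ‖v i‖
  set m := Int.log 2 (Λ ^ (1/s))
  have hblock : ∀ k, ‖∑ i ∈ T with level i = k, v i‖ ≤ 2 * U * Λ ^ (1/q) * x ^ k := by
    intro k
    rw [Real.rpow_zpow_comm zero_le_two]
    refine norm_sum_le_of_norm_mem_Icc hs.le hq.le hr hU (zpow_pos two_pos k)
      (hgrowth _ ((Finset.filter_subset _ _).trans (Finset.filter_subset _ _))) ?_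
      (Finset.sum_le_sum_of_subset_of_nonneg
        ((Finset.filter_subset _ _).trans (Finset.filter_subset _ _)) fun _ _ _ => by positivity)
    intro i hi
    obtain ⟨⟨-, hvi⟩, rfl⟩ := Finset.mem_filter.1 hi |>.imp_left Finset.mem_filter.1
    exact mem_Icc_zpow_log_two (norm_pos_iff.2 hvi)
  have hlevel : ∀ k ∈ T.image level, k ≤ m := by
    intro k hk
    obtain ⟨i, hi, rfl⟩ := Finset.mem_image.1 hk
    obtain ⟨hi, hvi⟩ := Finset.mem_filter.1 hi
    exact Int.log_mono_right (norm_pos_iff.2 hvi) (hnorm_le i hi)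
  have hxm : x ^ m ≤ (Λ ^ (1/s)) ^ (1 - s/q) := by
    rw [Real.rpow_zpow_comm zero_le_two]
    gcongr
    · rw [sub_nonneg, div_le_one hq]; exact hsq.le
    · exact Int.zpow_log_le_self one_lt_two (by positivity)
  calc ‖∑ i ∈ T, v i‖
      = ‖∑ k ∈ T.image level, ∑ i ∈ T with level i = k, v i‖ := by
        rw [Finset.sum_fiberwise_of_maps_to fun i hi => Finset.mem_image_of_mem level hi]
    _ ≤ ∑ k ∈ T.image level, 2 * U * Λ ^ (1/q) * x ^ k :=
        (norm_sum_le _ _).trans (Finset.sum_le_sum fun k _ => hblock k)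
    _ ≤ 2 * U * Λ ^ (1/q) * ((Λ ^ (1/s)) ^ (1 - s/q) * (1 - x⁻¹)⁻¹) := by
        rw [← Finset.mul_sum]
        gcongr
        exact (sum_zpow_le_of_forall_le hx hlevel).trans (by gcongr)
    _ = 2 * U * (1 - x⁻¹)⁻¹ * Λ ^ (1/s) := by
        have hexp : Λ ^ (1/q) * (Λ ^ (1/s)) ^ (1 - s/q) = Λ ^ (1/s) := by
          rw [← Real.rpow_mul hΛ.le, ← Real.rpow_add hΛ]
          congr 1
          field_simp
          ring
        linear_combination (2 * U * (1 - x⁻¹)⁻¹) * hexp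

end GrowthDecomposition

theorem MeasureTheory.MemLp.toLp_finsetSum {α E ι : Type*} [MeasurableSpace α]
    {μ : Measure α} [NormedAddCommGroup E] {p : ℝ≥0∞} {f : ι → α → E}
    (hf : ∀ i, MemLp (f i) p μ) (A : Finset ι) :
    (memLp_finsetSum' A fun i _ => hf i).toLp (∑ i ∈ A, f i) = ∑ i ∈ A, (hf i).toLp (f i) := by
  classical
  induction A using Finset.induction_on with
  | empty => simp [MemLp.toLp_zero]
  | insert a A ha ih =>
    simp only [Finset.sum_insert ha, ← ih]
    exact MemLp.toLp_add _ _

section FourierProjection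

variable {X : Type*} [NormedAddCommGroup X] [NormedSpace ℂ X]

theorem continuous_fourierProj (I : Set ℤ) (c : ℤ →₀ X) : Continuous (fourierProj I c) :=
  continuous_finsetSum _ fun n _ => by
    by_cases h : n ∈ I <;> simp only [h, Set.indicator_of_mem, Set.indicator_of_notMem,
      not_false_eq_true] <;> fun_prop

theorem memLp_fourierProj (p : ℝ≥0∞) (I : Set ℤ) (c : ℤ →₀ X) :
    MemLp (fourierProj I c) p AddCircle.haarAddCircle := by
  have hc := continuous_fourierProj I c
  obtain ⟨t₀, ht₀⟩ := hc.norm.exists_forall_ge (by simp)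
  exact MemLp.of_bound hc.aestronglyMeasurable _ (Filter.Eventually.of_forall ht₀)

theorem fourierProj_congr {I J : Set ℤ} {c : ℤ →₀ X} (h : ∀ n ∈ c.support, n ∈ I ↔ n ∈ J) :
    fourierProj I c = fourierProj J c := by
  funext t
  refine Finset.sum_congr rfl fun n hn => ?_
  by_cases hI : n ∈ I
  · rw [Set.indicator_of_mem hI, Set.indicator_of_mem ((h n hn).1 hI)]
  · rw [Set.indicator_of_notMem hI, Set.indicator_of_notMem (mt (h n hn).2 hI)]

theorem fourierProj_eq_zero {I : Set ℤ} {c : ℤ →₀ X} (h : ∀ n ∈ c.support, n ∉ I) :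
    fourierProj I c = 0 := by
  rw [fourierProj_congr (J := ∅) (by simpa using h)]
  funext t
  simp [fourierProj]

theorem fourierProj_biUnion {ι : Type*} {P : ι → Set ℤ} {A : Finset ι}
    (hP : (A : Set ι).PairwiseDisjoint P) (c : ℤ →₀ X) :
    fourierProj (⋃ i ∈ A, P i) c = ∑ i ∈ A, fourierProj (P i) c := by
  funext t
  simp only [fourierProj, Finset.sum_apply, Finset.indicator_biUnion_apply A P hP]
  exact Finset.sum_comm

open Classical in
theorem fourierProj_filter (I J : Set ℤ) (c : ℤ →₀ X) :
    fourierProj J (c.filter (· ∈ I)) = fourierProj (J ∩ I) c := by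
  funext t
  simp only [fourierProj]
  rw [Finsupp.support_filter, Finset.sum_filter]
  refine Finset.sum_congr rfl fun n _ => ?_
  by_cases hI : n ∈ I <;> by_cases hJ : n ∈ J <;> simp [hI, hJ, Finsupp.filter_apply]

def HasFourierGrowthBound (X : Type*) [NormedAddCommGroup X] [NormedSpace ℂ X] (p : ℝ≥0∞)
    (q r U : ℝ) : Prop :=
  ∀ (𝓘 : Finset (Set ℤ)), (𝓘 : Set (Set ℤ)).Pairwise Disjoint →
      (∀ I ∈ 𝓘, I.OrdConnected) → ∀ c : ℤ →₀ X, (c.support : Set ℤ) ⊆ ⋃ I ∈ 𝓘, I →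
      tpNorm p (fourierProj Set.univ c) ≤
        U * (𝓘.card : ℝ) ^ (1/q - 1/r) *
              (∑ I ∈ 𝓘, tpNorm p (fourierProj I c) ^ r) ^ (1/r)

theorem HasFourierGrowthBound.tpNorm_fourierProj_biUnion_le {p : ℝ≥0∞} {q r U : ℝ}
    (hU : HasFourierGrowthBound X p q r U) (hU0 : 0 ≤ U) (hq : 0 < q) (hqr : q ≤ r)
    {ι : Type*} {P : ι → Set ℤ}
    (hP : Pairwise (Function.onFun Disjoint P)) (hord : ∀ i, (P i).OrdConnected)
    (c : ℤ →₀ X) (A : Finset ι) :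
    tpNorm p (fourierProj (⋃ i ∈ A, P i) c) ≤
      U * (A.card : ℝ) ^ (1/q - 1/r) * (∑ i ∈ A, tpNorm p (fourierProj (P i) c) ^ r) ^ (1/r) := by
  classical
  set J := ⋃ i ∈ A, P i
  have hJ : J = ⋃ I ∈ A.image P, I := (Finset.set_biUnion_finset_image (g := id)).symm
  have hdisj : (A.image P : Set (Set ℤ)).Pairwise Disjoint := by
    simp only [Finset.coe_image]
    rintro _ ⟨i, -, rfl⟩ _ ⟨j, -, rfl⟩ hne
    exact hP (ne_of_apply_ne P hne)
  have hbound := hU (A.image P) hdisj (by simp [hord]) (c.filter (· ∈ J))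
    (by rw [← hJ, Finsupp.support_filter, Finset.coe_filter]; exact fun n hn => hn.2)
  have hproj : ∀ I ∈ A.image P, fourierProj I (c.filter (· ∈ J)) = fourierProj I c := by
    intro I hI
    rw [fourierProj_filter,
      Set.inter_eq_left.2 (hJ ▸ Finset.subset_set_biUnion_of_mem (f := id) hI)]
  rw [fourierProj_filter, Set.univ_inter, Finset.sum_congr rfl fun I hI => by rw [hproj I hI]]
    at hbound
  have hr : 0 < r := hq.trans_le hqr
  have hexp : 0 ≤ 1/q - 1/r := sub_nonneg.2 (one_div_le_one_div_of_le hq hqr)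
  refine hbound.trans ?_
  simp only [tpNorm]
  gcongr
  · exact_mod_cast Finset.card_image_le
  · exact Finset.sum_image_le_of_nonneg fun I _ => by positivity

theorem exists_finset_fourierProj_univ_eq {ι : Type*} {P : ι → Set ℤ}
    (hP : Pairwise (Function.onFun Disjoint P)) (hcov : ⋃ i, P i = Set.univ) (c : ℤ →₀ X) :
    ∃ S : Finset ι, fourierProj Set.univ c = fourierProj (⋃ i ∈ S, P i) c ∧
      ∀ i ∉ S, fourierProj (P i) c = 0 := by
  classical
  choose idx hidx using fun n => Set.mem_iUnion.1 (hcov.symm ▸ Set.mem_univ n : n ∈ ⋃ i, P i)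
  refine ⟨c.support.image idx, fourierProj_congr fun n hn => ?_,
    fun i hi => fourierProj_eq_zero fun n hn hni => hi ?_⟩
  · exact iff_of_true (Set.mem_univ n)
      (Set.mem_iUnion₂.2 ⟨idx n, Finset.mem_image_of_mem idx hn, hidx n⟩)
  · rw [← hP.eq (Set.not_disjoint_iff.2 ⟨n, hidx n, hni⟩)]
    exact Finset.mem_image_of_mem idx hn

theorem norm_sum_toLp_fourierProj {p : ℝ≥0∞} {ι : Type*} {P : ι → Set ℤ}
    (hP : Pairwise (Function.onFun Disjoint P)) (c : ℤ →₀ X) (A : Finset ι) :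
    ‖∑ i ∈ A, (memLp_fourierProj p (P i) c).toLp‖ = tpNorm p (fourierProj (⋃ i ∈ A, P i) c) := by
  rw [← MemLp.toLp_finsetSum, Lp.norm_toLp, fourierProj_biUnion (hP.set_pairwise _)]
  rfl

end FourierProjection

/-- If for some `r > q` the growth bound
`‖f‖_{L^p} ≤ U (#𝓘)^{1/q-1/r} (Σ_{I∈𝓘} ‖D_I f‖^r)^{1/r}` holds for all finite families of
disjoint intervals and all polynomials supported there, then `X` has upper
`ℓ^s(L^p)`-decompositions for every `1 ≤ s < q`. -/
theorem growth_implies_upper_decompositions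
    {X : Type*} [NormedAddCommGroup X] [NormedSpace ℂ X]
    (p : ℝ≥0∞) (hp : 1 ≤ p) (s q r : ℝ) (hs : 1 ≤ s) (hsq : s < q) (hqr : q < r) (U : ℝ)
    (hU0 : 0 < U)
    (hU : ∀ (𝓘 : Finset (Set ℤ)), (𝓘 : Set (Set ℤ)).Pairwise Disjoint →
      (∀ I ∈ 𝓘, I.OrdConnected) → ∀ c : ℤ →₀ X, (c.support : Set ℤ) ⊆ ⋃ I ∈ 𝓘, I →
      tpNorm p (fourierProj Set.univ c) ≤
        U * (𝓘.card : ℝ) ^ (1/q - 1/r) *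
          (∑ I ∈ 𝓘, tpNorm p (fourierProj I c) ^ r) ^ (1/r)) :
    ∃ C : ℝ, 0 < C ∧ ∀ (ι : Type) (P : ι → Set ℤ),
      Pairwise (Function.onFun Disjoint P) → (⋃ i, P i) = Set.univ →
      (∀ i, (P i).OrdConnected) → ∀ c : ℤ →₀ X,
      tpNorm p (fourierProj Set.univ c) ≤
        C * (∑' i, tpNorm p (fourierProj (P i) c) ^ s) ^ (1/s) := by
  have : Fact (1 ≤ p) := ⟨hp⟩
  have hs0 : 0 < s := zero_lt_one.trans_le hs
  have hq0 : 0 < q := hs0.trans hsq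
  have hρ : (2:ℝ) ^ (s/q - 1) < 1 :=
    Real.rpow_lt_one_of_one_lt_of_neg one_lt_two (by rw [sub_neg, div_lt_one hq0]; exact hsq)
  refine ⟨2 * U * (1 - 2 ^ (s/q - 1))⁻¹, by have := sub_pos.2 hρ; positivity,
    fun ι P hP hcov hord c => ?_⟩
  obtain ⟨S, hS, hS_zero⟩ := exists_finset_fourierProj_univ_eq hP hcov c
  have hv (i : ι) : ‖(memLp_fourierProj p (P i) c).toLp‖ = tpNorm p (fourierProj (P i) c) :=
    Lp.norm_toLp _ _
  have key := norm_sum_le_of_growth hs0 hsq (hq0.trans hqr) hU0.le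
    (v := fun i => (memLp_fourierProj p (P i) c).toLp) (S := S) fun A _ => by
    simpa only [norm_sum_toLp_fourierProj hP, hv] using
      HasFourierGrowthBound.tpNorm_fourierProj_biUnion_le (X := X) hU hU0.le hq0 hqr.le hP hord c A
  rw [tsum_eq_sum fun i hi => by simp [hS_zero i hi, tpNorm, hs0.ne'], hS,
    ← norm_sum_toLp_fourierProj hP]
  simpa only [hv] using key
end
end

section
/- Let X be a Banach space, p ∈ [1,2], q ∈ [1,∞], and suppose ‖Σ_{k=1}^n e_k x_k‖_{L^p(𝕋;X)} ≤ U (Σ_{k=1}^n ‖x_k‖^q)^{1/q} holds for all finite sequences in X. Then with 1/s = 1 - p/(2q'), one has ‖Σ_{k=1}^n e_k x_k‖_{L^2(𝕋;X)} ≤ U^{p/2} n^{1/s - 1/2} (Σ_{k=1}^n ‖x_k‖²)^{1/2} for all x_1,...,x_n ∈ X. -/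
/-!
For `F = Σ e_k x_k` one has pointwise `‖F‖² ≤ ‖F‖_∞^{2-p} ‖F‖^p` with `‖F‖_∞ ≤ Σ ‖x_k‖`, so
`‖F‖_{L²} ≤ (Σ ‖x_k‖)^{1-p/2} ‖F‖_{L^p}^{p/2}`; inserting the hypothesis and comparing the `ℓ¹` and
`ℓ^q` norms with the `ℓ²` norm on `n` points gives the bound, the exponents combining to
`1/s - 1/2`. The comparison needs `q ≤ 2`, and a nonzero space admits no such estimate with
`q > 2`: the Rudin–Shapiro pairs `P, Q` with `2^K` unimodular coefficients satisfy
`|P|² + |Q|² = 2^{K+1}` pointwise, which forces `‖P v‖_p^p + ‖Q v‖_p^p ≥ (2^{K+1})^{p/2} ‖v‖^p`,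
while the estimate bounds each term by `(U 2^{K/q} ‖v‖)^p`.
-/

open MeasureTheory Set
open scoped ENNReal BigOperators

noncomputable section

theorem Real.Lp_le_card_rpow_mul_Lr_of_nonneg {ι : Type*} (s : Finset ι) {f : ι → ℝ}
    (hf : ∀ i ∈ s, 0 ≤ f i) {p r : ℝ} (hp : 0 < p) (hpr : p ≤ r) :
    (∑ i ∈ s, f i ^ p) ^ (1 / p) ≤
      (s.card : ℝ) ^ (1 / p - 1 / r) * (∑ i ∈ s, f i ^ r) ^ (1 / r) := by
  have hr : 0 < r := hp.trans_le hpr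
  have hsum : 0 ≤ ∑ i ∈ s, f i ^ p := Finset.sum_nonneg fun i hi => Real.rpow_nonneg (hf i hi) p
  have key := Real.rpow_sum_le_const_mul_sum_rpow_of_nonneg (s := s) (f := fun i => f i ^ p)
    (p := r / p) ((one_le_div hp).2 hpr) fun i hi => Real.rpow_nonneg (hf i hi) p
  have hpow : ∀ i ∈ s, (f i ^ p) ^ (r / p) = f i ^ r := fun i hi => by
    rw [← Real.rpow_mul (hf i hi), mul_div_cancel₀ r hp.ne']
  rw [Finset.sum_congr rfl hpow] at key
  calc (∑ i ∈ s, f i ^ p) ^ (1 / p) = ((∑ i ∈ s, f i ^ p) ^ (r / p)) ^ (1 / r) := by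
        rw [← Real.rpow_mul hsum]; congr 1; field_simp
    _ ≤ ((s.card : ℝ) ^ (r / p - 1) * ∑ i ∈ s, f i ^ r) ^ (1 / r) := by gcongr
    _ = (s.card : ℝ) ^ (1 / p - 1 / r) * (∑ i ∈ s, f i ^ r) ^ (1 / r) := by
        rw [Real.mul_rpow (by positivity)
          (Finset.sum_nonneg fun i hi => Real.rpow_nonneg (hf i hi) r),
          ← Real.rpow_mul (by positivity)]
        congr 2
        field_simp

theorem sq_le_rpow_mul_rpow {a M p : ℝ} (ha : 0 ≤ a) (haM : a ≤ M) (hp : p ≤ 2) :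
    a ^ 2 ≤ M ^ (2 - p) * a ^ p :=
  calc a ^ 2 = a ^ (2 - p) * a ^ p := by
        rw [← Real.rpow_add' ha (by norm_num), sub_add_cancel, Real.rpow_two]
    _ ≤ M ^ (2 - p) * a ^ p := by
        gcongr ?_ * _
        exact Real.rpow_le_rpow ha haM (by linarith)

theorem rpow_le_rpow_add_rpow_of_sq_add_sq_eq {a b B p : ℝ} (ha : 0 ≤ a) (hb : 0 ≤ b)
    (hB : 0 < B) (hab : a ^ 2 + b ^ 2 = B ^ 2) (hp : p ≤ 2) : B ^ p ≤ a ^ p + b ^ p := by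
  have haB : a ≤ B := abs_le_of_sq_le_sq' (by nlinarith) hB.le |>.2
  have hbB : b ≤ B := abs_le_of_sq_le_sq' (by nlinarith) hB.le |>.2
  refine le_of_mul_le_mul_left ?_ (Real.rpow_pos_of_pos hB (2 - p))
  calc B ^ (2 - p) * B ^ p = a ^ 2 + b ^ 2 := by
        rw [hab, ← Real.rpow_add hB, sub_add_cancel, Real.rpow_two]
    _ ≤ B ^ (2 - p) * (a ^ p + b ^ p) := by
        rw [mul_add]
        exact add_le_add (sq_le_rpow_mul_rpow ha haB hp) (sq_le_rpow_mul_rpow hb hbB hp)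

theorem Real.mul_rpow_one_sub_mul_mul_rpow {N S : ℝ} (hN : 0 < N) (hS : 0 ≤ S) {U : ℝ}
    (hU : 0 ≤ U) (a b θ : ℝ) :
    (N ^ a * S) ^ (1 - θ) * (U * (N ^ b * S)) ^ θ = U ^ θ * N ^ (a * (1 - θ) + b * θ) * S := by
  rw [Real.mul_rpow (by positivity) hS, Real.mul_rpow hU (by positivity),
    Real.mul_rpow (by positivity) hS, ← Real.rpow_mul hN.le, ← Real.rpow_mul hN.le,
    Real.rpow_add hN]
  have hS1 : S ^ (1 - θ) * S ^ θ = S := by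
    rw [← Real.rpow_add' hS (by norm_num), sub_add_cancel, Real.rpow_one]
  conv_rhs => rw [← hS1]
  ring

section Circle

variable {E : Type*} [NormedAddCommGroup E]

theorem tpNorm_nonneg (p : ℝ≥0∞) (F : AddCircle (1:ℝ) → E) : 0 ≤ tpNorm p F :=
  ENNReal.toReal_nonneg

theorem Continuous.integrable_haarAddCircle {F : AddCircle (1:ℝ) → ℝ} (hF : Continuous F) :
    Integrable F AddCircle.haarAddCircle :=
  hF.integrable_of_hasCompactSupport (.of_compactSpace F)

theorem tpNorm_ofReal_rpow {F : AddCircle (1:ℝ) → E} (hF : Continuous F) {r : ℝ} (hr : 0 < r) :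
    tpNorm (ENNReal.ofReal r) F ^ r = ∫ t, ‖F t‖ ^ r ∂AddCircle.haarAddCircle := by
  have hF' : MemLp F (ENNReal.ofReal r) AddCircle.haarAddCircle :=
    hF.memLp_of_hasCompactSupport (.of_compactSpace F)
  rw [tpNorm, hF'.eLpNorm_eq_integral_rpow_norm (by simpa using hr) ENNReal.ofReal_ne_top,
    ENNReal.toReal_ofReal hr.le, ENNReal.toReal_ofReal (by positivity),
    ← Real.rpow_mul (integral_nonneg fun t => by positivity), inv_mul_cancel₀ hr.ne',
    Real.rpow_one]

theorem tpNorm_two_le_of_norm_le {F : AddCircle (1:ℝ) → E} (hF : Continuous F) {M : ℝ}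
    (hM : ∀ t, ‖F t‖ ≤ M) {p : ℝ} (hp : 0 < p) (hp2 : p ≤ 2) :
    tpNorm 2 F ≤ M ^ (1 - p / 2) * tpNorm (ENNReal.ofReal p) F ^ (p / 2) := by
  have hM0 : 0 ≤ M := (norm_nonneg _).trans (hM 0)
  have h2 := tpNorm_ofReal_rpow hF two_pos
  rw [ENNReal.ofReal_ofNat] at h2
  have hTp := tpNorm_nonneg (ENNReal.ofReal p) F
  refine (Real.rpow_le_rpow_iff (tpNorm_nonneg _ _) (by positivity) two_pos).1 ?_
  rw [h2, Real.mul_rpow (by positivity) (by positivity), ← Real.rpow_mul hM0,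
    ← Real.rpow_mul hTp, show (1 - p / 2) * 2 = 2 - p by ring, div_mul_cancel₀ p two_ne_zero,
    tpNorm_ofReal_rpow hF hp, ← integral_const_mul]
  refine integral_mono ?_ ?_ fun t => ?_
  · exact (hF.norm.rpow_const fun _ => Or.inr zero_le_two).integrable_haarAddCircle
  · exact ((hF.norm.rpow_const fun _ => Or.inr hp.le).integrable_haarAddCircle).const_mul _
  · rw [Real.rpow_two]
    exact sq_le_rpow_mul_rpow (norm_nonneg _) (hM t) hp2

theorem rpow_le_tpNorm_rpow_add_tpNorm_rpow {F G : AddCircle (1:ℝ) → E} (hF : Continuous F)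
    (hG : Continuous G) {B : ℝ} (hB : 0 < B) (hFG : ∀ t, ‖F t‖ ^ 2 + ‖G t‖ ^ 2 = B ^ 2) {p : ℝ} (hp : 0 < p) (hp2 : p ≤ 2) :
    B ^ p ≤ tpNorm (ENNReal.ofReal p) F ^ p + tpNorm (ENNReal.ofReal p) G ^ p := by
  have hFp := (hF.norm.rpow_const fun _ => Or.inr hp.le).integrable_haarAddCircle
  have hGp := (hG.norm.rpow_const fun _ => Or.inr hp.le).integrable_haarAddCircle
  rw [tpNorm_ofReal_rpow hF hp, tpNorm_ofReal_rpow hG hp, ← integral_add hFp hGp]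
  calc B ^ p = ∫ _, B ^ p ∂AddCircle.haarAddCircle := by simp
    _ ≤ _ := integral_mono (integrable_const _) (hFp.add hGp) fun t =>
        rpow_le_rpow_add_rpow_of_sq_add_sq_eq (norm_nonneg _) (norm_nonneg _) hB (hFG t) hp2

end Circle

theorem norm_fourier_apply {T : ℝ} (n : ℤ) (t : AddCircle T) : ‖fourier n t‖ = 1 :=
  Circle.norm_coe _

section ExpSum

variable {X : Type*} [NormedAddCommGroup X] [NormedSpace ℂ X]

def expSum {n : ℕ} (x : Fin n → X) : AddCircle (1:ℝ) → X :=
  fun t => ∑ k : Fin n, (fourier (((k : ℕ) : ℤ) + 1) t) • x k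

variable (X) in
def FourierBound (p q U : ℝ) : Prop :=
  ∀ (n : ℕ) (x : Fin n → X),
    tpNorm (ENNReal.ofReal p) (expSum x) ≤ U * (∑ k, ‖x k‖ ^ q) ^ (1 / q)

theorem continuous_expSum {n : ℕ} (x : Fin n → X) : Continuous (expSum x) :=
  continuous_finsetSum _ fun _ _ => (fourier _).continuous.smul continuous_const

theorem norm_expSum_le {n : ℕ} (x : Fin n → X) (t : AddCircle (1:ℝ)) :
    ‖expSum x t‖ ≤ ∑ k, ‖x k‖ :=
  (norm_sum_le _ _).trans_eq (by simp only [norm_smul, norm_fourier_apply, one_mul])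

theorem expSum_smul_const {n : ℕ} (c : Fin n → ℂ) (v : X) (t : AddCircle (1:ℝ)) :
    expSum (fun k => c k • v) t = expSum c t • v := by
  simp only [expSum, Finset.sum_smul, smul_smul, smul_eq_mul]

theorem expSum_neg {n : ℕ} (x : Fin n → X) (t : AddCircle (1:ℝ)) :
    expSum (-x) t = -expSum x t := by
  simp [expSum]

theorem expSum_append {m n : ℕ} (x : Fin m → X) (y : Fin n → X) (t : AddCircle (1:ℝ)) :
    expSum (Fin.append x y) t = expSum x t + fourier (m : ℤ) t • expSum y t := by
  simp only [expSum, Fin.sum_univ_add, Fin.append_left, Fin.append_right, Finset.smul_sum,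
    smul_smul, ← fourier_add, Fin.val_natAdd, Fin.val_castAdd, Nat.cast_add, add_assoc]

end ExpSum

theorem exists_rudinShapiro_pair (K : ℕ) :
    ∃ c d : Fin (2 ^ K) → ℂ, (∀ k, ‖c k‖ = 1) ∧ (∀ k, ‖d k‖ = 1) ∧
      ∀ t, ‖expSum c t‖ ^ 2 + ‖expSum d t‖ ^ 2 = 2 * 2 ^ K := by
  induction K with
  | zero =>
    refine ⟨1, 1, fun _ => by simp, fun _ => by simp, fun t => ?_⟩
    simp [expSum, Circle.norm_coe]
    norm_num
  | succ K ih =>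
    obtain ⟨c, d, hc, hd, hflat⟩ := ih
    rw [show 2 ^ (K + 1) = 2 ^ K + 2 ^ K by ring]
    refine ⟨Fin.append c d, Fin.append c (-d), ?_, ?_, fun t => ?_⟩
    · exact Fin.addCases (fun i => by rw [Fin.append_left, hc])
        (fun i => by rw [Fin.append_right, hd])
    · exact Fin.addCases (fun i => by rw [Fin.append_left, hc])
        (fun i => by rw [Fin.append_right, Pi.neg_apply, norm_neg, hd])
    · rw [expSum_append, expSum_append, expSum_neg, smul_neg, ← sub_eq_add_neg]
      have := parallelogram_law_with_norm ℂ (expSum c t) (fourier (2 ^ K : ℕ) t • expSum d t)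
      simp only [norm_smul, norm_fourier_apply, one_mul] at this
      rw [this, hflat]
      ring

namespace FourierBound

variable {X : Type*} [NormedAddCommGroup X] [NormedSpace ℂ X] {p q U : ℝ}

theorem tpNorm_expSum_smul_le (hU : FourierBound X p q U) (hq : q ≠ 0) {n : ℕ} {c : Fin n → ℂ}
    (hc : ∀ k, ‖c k‖ = 1) (v : X) :
    tpNorm (ENNReal.ofReal p) (expSum fun k => c k • v) ≤ U * (n : ℝ) ^ (1 / q) * ‖v‖ := by
  have h := hU n fun k => c k • v
  simp only [norm_smul, hc, one_mul, Finset.sum_const, Finset.card_univ, Fintype.card_fin,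
    nsmul_eq_mul] at h
  rwa [Real.mul_rpow (by positivity) (by positivity), ← Real.rpow_mul (norm_nonneg v),
    mul_one_div_cancel hq, Real.rpow_one, ← mul_assoc] at h

theorem two_pow_rpow_le (hU : FourierBound X p q U) (hp : 0 < p) (hp2 : p ≤ 2) (hq : q ≠ 0)
    {v : X} (hv : v ≠ 0) (K : ℕ) : ((2:ℝ) ^ K) ^ (1 / 2 - 1 / q) ≤ 2 ^ (1 / p) * U := by
  obtain ⟨c, d, hc, hd, hflat⟩ := exists_rudinShapiro_pair K
  have hP := hU.tpNorm_expSum_smul_le hq hc v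
  have hQ := hU.tpNorm_expSum_smul_le hq hd v
  push_cast at hP hQ
  set N : ℝ := 2 ^ K
  have hN : 0 < N := by positivity
  have hv' : 0 < ‖v‖ := norm_pos_iff.2 hv
  set A := U * N ^ (1 / q) * ‖v‖
  have hA : 0 ≤ A := (tpNorm_nonneg _ _).trans hP
  have hflat' : ∀ t, ‖expSum (fun k => c k • v) t‖ ^ 2 + ‖expSum (fun k => d k • v) t‖ ^ 2 =
      (√(2 * N) * ‖v‖) ^ 2 := fun t => by
    rw [expSum_smul_const, expSum_smul_const, norm_smul, norm_smul, mul_pow, mul_pow, mul_pow,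
      ← add_mul, hflat, Real.sq_sqrt (by positivity)]
  have hBA : (√(2 * N) * ‖v‖) ^ p ≤ (2 ^ (1 / p) * A) ^ p :=
    calc (√(2 * N) * ‖v‖) ^ p
        ≤ tpNorm (ENNReal.ofReal p) (expSum fun k => c k • v) ^ p +
          tpNorm (ENNReal.ofReal p) (expSum fun k => d k • v) ^ p :=
          rpow_le_tpNorm_rpow_add_tpNorm_rpow (continuous_expSum _) (continuous_expSum _)
            (by positivity) hflat' hp hp2
      _ ≤ A ^ p + A ^ p := add_le_add (Real.rpow_le_rpow (tpNorm_nonneg _ _) hP hp.le)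
          (Real.rpow_le_rpow (tpNorm_nonneg _ _) hQ hp.le)
      _ = (2 ^ (1 / p) * A) ^ p := by
          rw [Real.mul_rpow (by positivity) hA, ← Real.rpow_mul zero_le_two,
            one_div_mul_cancel hp.ne', Real.rpow_one, two_mul]
  have hBA' := (Real.rpow_le_rpow_iff (by positivity) (by positivity) hp).1 hBA
  have hsqrt : √(2 * N) ≤ 2 ^ (1 / p) * U * N ^ (1 / q) :=
    le_of_mul_le_mul_right (by linarith) hv'
  calc N ^ (1 / 2 - 1 / q) = N ^ (1 / 2 : ℝ) / N ^ (1 / q) := Real.rpow_sub hN _ _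
    _ ≤ √(2 * N) / N ^ (1 / q) := by
        gcongr
        rw [← Real.sqrt_eq_rpow]
        exact Real.sqrt_le_sqrt (by linarith)
    _ ≤ 2 ^ (1 / p) * U := (div_le_iff₀ (by positivity)).2 hsqrt

theorem le_two (hU : FourierBound X p q U) (hp : 0 < p) (hp2 : p ≤ 2) {v : X} (hv : v ≠ 0) :
    q ≤ 2 := by
  by_contra! hq
  have he : 0 < 1 / 2 - 1 / q := by
    have : 1 / q < 1 / 2 := one_div_lt_one_div_of_lt two_pos hq
    linarith
  have hgrow : Filter.Tendsto (fun K : ℕ => ((2:ℝ) ^ K) ^ (1 / 2 - 1 / q)) Filter.atTop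
      Filter.atTop :=
    (tendsto_rpow_atTop he).comp (tendsto_pow_atTop_atTop_of_one_lt one_lt_two)
  obtain ⟨K, hK⟩ := (hgrow.eventually_gt_atTop (2 ^ (1 / p) * U)).exists
  exact (hU.two_pow_rpow_le hp hp2 (by positivity) hv K).not_gt hK

theorem tpNorm_two_expSum_le (hU : FourierBound X p q U) (hp : 0 < p) (hp2 : p ≤ 2) (hq : 0 < q)
    (hq2 : q ≤ 2) (hU0 : 0 ≤ U) {n : ℕ} (hn : 0 < n) (x : Fin n → X) :
    tpNorm 2 (expSum x) ≤ U ^ (p / 2) * (n : ℝ) ^ ((1 - 1 / 2) * (1 - p / 2) +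
      (1 / q - 1 / 2) * (p / 2)) * (∑ k, ‖x k‖ ^ 2) ^ (1 / 2 : ℝ) := by
  have hℓ1 := Real.Lp_le_card_rpow_mul_Lr_of_nonneg Finset.univ (fun k _ => norm_nonneg (x k))
    one_pos one_le_two
  have hℓq := Real.Lp_le_card_rpow_mul_Lr_of_nonneg Finset.univ (fun k _ => norm_nonneg (x k))
    hq hq2
  simp only [Real.rpow_one, div_one, Real.rpow_two, Finset.card_univ, Fintype.card_fin] at hℓ1 hℓq
  calc tpNorm 2 (expSum x)
      ≤ (∑ k, ‖x k‖) ^ (1 - p / 2) * tpNorm (ENNReal.ofReal p) (expSum x) ^ (p / 2) :=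
        tpNorm_two_le_of_norm_le (continuous_expSum x) (norm_expSum_le x) hp hp2
    _ ≤ ((n : ℝ) ^ (1 - 1 / 2 : ℝ) * (∑ k, ‖x k‖ ^ 2) ^ (1 / 2 : ℝ)) ^ (1 - p / 2) *
          (U * ((n : ℝ) ^ (1 / q - 1 / 2) * (∑ k, ‖x k‖ ^ 2) ^ (1 / 2 : ℝ))) ^ (p / 2) := by
        refine mul_le_mul (Real.rpow_le_rpow (by positivity) hℓ1 (by linarith))
          (Real.rpow_le_rpow (tpNorm_nonneg _ _) ((hU n x).trans ?_) (by positivity))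
          (Real.rpow_nonneg (tpNorm_nonneg _ _) _) (by positivity)
        exact mul_le_mul_of_nonneg_left hℓq hU0
    _ = _ := Real.mul_rpow_one_sub_mul_mul_rpow (by positivity) (by positivity) hU0 _ _ _

end FourierBound

/-- Interpolation of a discrete Hausdorff–Young type estimate with the trivial `ℓ¹-L^∞`
bound: if `‖Σ e_k x_k‖_{L^p} ≤ U (Σ‖x_k‖^q)^{1/q}` for `p ∈ [1,2]`, then with
`1/s = 1 - p/(2q')` one has
`‖Σ e_k x_k‖_{L²} ≤ U^{p/2} n^{1/s - 1/2} (Σ‖x_k‖²)^{1/2}`. -/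
theorem interpolated_fourier_bound
    {X : Type*} [NormedAddCommGroup X] [NormedSpace ℂ X]
    (p q q' s : ℝ) (hp1 : 1 ≤ p) (hp2 : p ≤ 2) (hq : 1 ≤ q)
    (hq' : 1/q + 1/q' = 1) (hs : 1/s = 1 - p/(2*q'))
    (U : ℝ) (hU0 : 0 ≤ U)
    (hU : ∀ (n : ℕ) (x : Fin n → X),
      tpNorm (ENNReal.ofReal p) (fun t => ∑ k : Fin n, (fourier (((k : ℕ) : ℤ) + 1) t) • x k) ≤
        U * (∑ k, ‖x k‖ ^ q) ^ (1/q)) :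
    ∀ (n : ℕ) (x : Fin n → X),
      tpNorm 2 (fun t => ∑ k : Fin n, (fourier (((k : ℕ) : ℤ) + 1) t) • x k) ≤
        U ^ (p/2) * (n : ℝ) ^ (1/s - 1/2) * (∑ k, ‖x k‖ ^ 2) ^ (1/2 : ℝ) := by
  intro n x
  rcases eq_or_ne x 0 with rfl | hx
  · simp [tpNorm]
  obtain ⟨k₀, hk₀⟩ := Function.ne_iff.1 hx
  have hp : 0 < p := by linarith
  have hq2 : q ≤ 2 := FourierBound.le_two hU hp hp2 hk₀
  have hexp : (1 - 1 / 2) * (1 - p / 2) + (1 / q - 1 / 2) * (p / 2) = 1 / s - 1 / 2 := by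
    rw [hs, show p / (2 * q') = p / 2 * (1 / q') by ring, show 1 / q' = 1 - 1 / q by linarith]
    ring
  rw [← hexp]
  exact FourierBound.tpNorm_two_expSum_le hU hp hp2 (by linarith) hq2 hU0 k₀.pos x
end
end

section
/- Let X be a complex Banach lattice that is q-concave with constant 1 for some q ∈ [1,∞), and let T : X → X be a positive bounded operator with ‖e^{nT}‖ ≤ K_s e^n for all n ∈ ℕ. Then for every n ≥ 100 and x ≥ 0 in X, (Σ_{n-√n ≤ k ≤ n} ‖T^k x‖^q)^{1/q} ≤ 28 K_s √n ‖x‖. -/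
/-!
For `n - √n ≤ k ≤ n` the Poisson weight `nᵏ/k!` is at least `eⁿ/(28√n)`: Stirling bounds `n!`
by `e√n (n/e)ⁿ`, and `n!/k! ≥ (n - √n)^(n-k) ≥ e⁻² n^(n-k)`. Since `T` is positive, the block
`Σ_{n-√n ≤ k ≤ n} (nᵏ/k!) Tᵏx` of the series of `e^{nT}x` is dominated by `e^{nT}x`, so its norm
is at most `Ks eⁿ ‖x‖`; `q`-concavity bounds the `ℓ^q`-sum of the norms of its terms by that
norm, and each term is at least `eⁿ/(28√n) ‖Tᵏx‖`.
-/

open scoped Nat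
open Filter Topology

theorem Real.exp_neg_two_mul_le_one_sub {t : ℝ} (ht0 : 0 ≤ t) (ht : t ≤ 1 / 2) :
    Real.exp (-(2 * t)) ≤ 1 - t := by
  have h1t : 0 < 1 - t := by linarith
  rw [← Real.le_log_iff_exp_le h1t]
  refine le_trans ?_ (Real.one_sub_inv_le_log_of_pos h1t)
  have : (1 - t)⁻¹ ≤ 1 + 2 * t := by
    rw [inv_le_iff_one_le_mul₀ h1t]; nlinarith
  linarith

theorem Real.exp_neg_two_le_one_sub_pow {t : ℝ} {m : ℕ} (ht0 : 0 ≤ t) (ht : t ≤ 1 / 2)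
    (hmt : m * t ≤ 1) :
    Real.exp (-2) ≤ (1 - t) ^ m :=
  calc Real.exp (-2) ≤ Real.exp (-(2 * t)) ^ m := by
        rw [← Real.exp_nat_mul, Real.exp_le_exp]; linarith
    _ ≤ (1 - t) ^ m :=
        pow_le_pow_left₀ (Real.exp_nonneg _) (Real.exp_neg_two_mul_le_one_sub ht0 ht) m

theorem Nat.factorial_le_exp_one_mul_sqrt_mul {n : ℕ} (hn : n ≠ 0) :
    (n ! : ℝ) ≤ Real.exp 1 * √n * (n / Real.exp 1) ^ n := by
  obtain ⟨m, rfl⟩ := Nat.exists_eq_add_one_of_ne_zero hn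
  have h : Stirling.stirlingSeq (m + 1) ≤ Stirling.stirlingSeq 1 :=
    Stirling.stirlingSeq'_antitone (Nat.zero_le m)
  rw [Stirling.stirlingSeq_one, Stirling.stirlingSeq, div_le_iff₀ (by positivity),
    Real.sqrt_mul zero_le_two] at h
  exact h.trans_eq (by field_simp)

theorem Real.exp_three_le_28 : Real.exp 3 ≤ 28 := by
  have h : Real.exp 3 = Real.exp 1 ^ 3 := by rw [← Real.exp_nat_mul]; norm_num
  rw [h]
  calc Real.exp 1 ^ 3 ≤ 2.7182818286 ^ 3 :=
        pow_le_pow_left₀ (Real.exp_pos 1).le Real.exp_one_lt_d9.le 3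
    _ ≤ 28 := by norm_num

theorem Real.exp_le_mul_sqrt_mul_pow_div_factorial {n k : ℕ} (hn : 4 ≤ n)
    (hk : n - √n ≤ k) (hkn : k ≤ n) :
    Real.exp n ≤ 28 * √n * (n ^ k / k !) := by
  set s := √n
  set m := n - k
  have hkm : k + m = n := by omega
  have hs2 : s * s = n := Real.mul_self_sqrt (Nat.cast_nonneg _)
  have hs : 2 ≤ s := Real.le_sqrt_of_sq_le (by norm_num; exact_mod_cast hn)
  have hm : (m : ℝ) ≤ s := by rw [Nat.cast_sub hkn]; linarith
  have near : (n : ℝ) ^ m ≤ Real.exp 2 * (n - s) ^ m := by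
    have h := Real.exp_neg_two_le_one_sub_pow (t := 1 / s) (m := m) (by positivity)
      (by rw [div_le_div_iff₀] <;> linarith) (by rw [mul_one_div, div_le_one] <;> linarith)
    have hsub : (n : ℝ) - s = (1 - 1 / s) * n := by rw [← hs2]; field_simp
    calc (n : ℝ) ^ m = Real.exp 2 * Real.exp (-2) * n ^ m := by rw [← Real.exp_add]; simp
      _ ≤ Real.exp 2 * (1 - 1 / s) ^ m * n ^ m := by gcongr
      _ = Real.exp 2 * (n - s) ^ m := by rw [hsub, mul_pow]; ring
  have drop : (k ! : ℝ) * (n - s) ^ m ≤ n ! := by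
    refine le_trans ?_ (Nat.cast_le.mpr (hkm ▸ Nat.factorial_mul_pow_le_factorial))
    push_cast
    gcongr
    · nlinarith
    · linarith
  have stirling := Nat.factorial_le_exp_one_mul_sqrt_mul (n := n) (by omega)
  have key : Real.exp n * k ! * n ^ m ≤ Real.exp 3 * s * n ^ k * n ^ m :=
    calc Real.exp n * k ! * n ^ m ≤ Real.exp n * Real.exp 2 * (k ! * (n - s) ^ m) := by
          have := mul_le_mul_of_nonneg_left near (by positivity : 0 ≤ Real.exp n * k !)
          linarith
      _ ≤ Real.exp n * Real.exp 2 * (Real.exp 1 * s * (n / Real.exp 1) ^ n) := by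
          gcongr ?_ * ?_
          exact drop.trans stirling
      _ = Real.exp 3 * s * n ^ k * n ^ m := by
          have h3 : Real.exp 3 = Real.exp 2 * Real.exp 1 := by rw [← Real.exp_add]; norm_num
          rw [div_pow, Real.exp_one_pow, ← hkm, pow_add, hkm, h3]
          field_simp
  rw [mul_div_assoc', le_div_iff₀ (by positivity)]
  calc Real.exp n * k ! ≤ Real.exp 3 * s * n ^ k := le_of_mul_le_mul_right key (by positivity)
    _ ≤ 28 * s * n ^ k := by gcongr; exact Real.exp_three_le_28

theorem Real.mul_sum_rpow_rpow_inv_le {ι : Type*} {s : Finset ι} {a w : ι → ℝ} {d q : ℝ}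
    (hd : 0 ≤ d) (hq : 0 < q) (ha : ∀ i ∈ s, 0 ≤ a i) (hw : ∀ i ∈ s, d ≤ w i) :
    d * (∑ i ∈ s, a i ^ q) ^ (1 / q) ≤ (∑ i ∈ s, (w i * a i) ^ q) ^ (1 / q) := by
  have hsum : 0 ≤ ∑ i ∈ s, a i ^ q := Finset.sum_nonneg fun i hi => Real.rpow_nonneg (ha i hi) q
  have scale : ∑ i ∈ s, (d * a i) ^ q = d ^ q * ∑ i ∈ s, a i ^ q := by
    rw [Finset.mul_sum]
    exact Finset.sum_congr rfl fun i hi => Real.mul_rpow hd (ha i hi)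
  calc d * (∑ i ∈ s, a i ^ q) ^ (1 / q) = (∑ i ∈ s, (d * a i) ^ q) ^ (1 / q) := by
        rw [scale, Real.mul_rpow (Real.rpow_nonneg hd q) hsum, ← Real.rpow_mul hd,
          mul_one_div_cancel hq.ne', Real.rpow_one]
    _ ≤ (∑ i ∈ s, (w i * a i) ^ q) ^ (1 / q) :=
        Real.rpow_le_rpow (Finset.sum_nonneg fun i hi => by have := ha i hi; positivity)
          (Finset.sum_le_sum fun i hi => Real.rpow_le_rpow (mul_nonneg hd (ha i hi))
            (mul_le_mul_of_nonneg_right (hw i hi) (ha i hi)) hq.le) (by positivity)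

/-- `X` carries no ordered-module structure, so the positivity of `c • v` has to be recovered from
`0 ≤ 2 • a → 0 ≤ a` at dyadic `c` and the closedness of the positive cone. -/
theorem smul_nonneg_of_hasSolidNorm {X : Type*} [NormedAddCommGroup X] [Lattice X]
    [HasSolidNorm X] [IsOrderedAddMonoid X] [NormedSpace ℝ X]
    {c : ℝ} (hc : 0 ≤ c) {v : X} (hv : 0 ≤ v) : 0 ≤ c • v := by
  have dyadic : ∀ p j : ℕ, 0 ≤ ((p : ℝ) / 2 ^ j) • v := by
    intro p j
    induction j with
    | zero => simpa [Nat.cast_smul_eq_nsmul ℝ] using nsmul_nonneg hv p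
    | succ j ih =>
      refine nsmul_two_semiclosed ?_
      convert ih using 1
      rw [← Nat.cast_smul_eq_nsmul ℝ, smul_smul, pow_succ]
      congr 1
      push_cast; ring
  have approx : Tendsto (fun j : ℕ => (⌊c * 2 ^ j⌋₊ : ℝ) / 2 ^ j) atTop (𝓝 c) :=
    (tendsto_nat_floor_mul_div_atTop hc).comp (tendsto_pow_atTop_atTop_of_one_lt one_lt_two)
  exact ge_of_tendsto (approx.smul_const v) (Eventually.of_forall fun j => dyadic _ j)

theorem norm_le_norm_of_nonneg_of_le {X : Type*} [NormedAddCommGroup X] [Lattice X]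
    [HasSolidNorm X] [IsOrderedAddMonoid X] {a b : X} (ha : 0 ≤ a) (hab : a ≤ b) :
    ‖a‖ ≤ ‖b‖ :=
  norm_le_norm_of_abs_le_abs <| by rwa [abs_of_nonneg ha, abs_of_nonneg (ha.trans hab)]

theorem sum_norm_rpow_rpow_inv_le_of_range {X : Type*} [NormedAddCommGroup X] [Preorder X]
    {q : ℝ} (hq : 0 < q)
    (hconc : ∀ (m : ℕ) (f : ℕ → X), (∀ i, 0 ≤ f i) →
      (∑ i ∈ Finset.range m, ‖f i‖ ^ q) ^ (1 / q) ≤ ‖∑ i ∈ Finset.range m, f i‖)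
    (s : Finset ℕ) {f : ℕ → X} (hf : ∀ i ∈ s, 0 ≤ f i) :
    (∑ i ∈ s, ‖f i‖ ^ q) ^ (1 / q) ≤ ‖∑ i ∈ s, f i‖ := by
  classical
  obtain ⟨m, hsm⟩ := s.exists_nat_subset_range
  have h := hconc m (fun i => if i ∈ s then f i else 0) fun i => by
    split_ifs with hi
    exacts [hf i hi, le_rfl]
  simpa only [apply_ite norm, norm_zero, apply_ite (· ^ q), Real.zero_rpow hq.ne',
    Finset.sum_ite_mem, Finset.inter_eq_right.mpr hsm] using h

theorem ContinuousLinearMap.pow_apply_nonneg {X : Type*} [NormedAddCommGroup X] [Preorder X]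
    [NormedSpace ℝ X] {T : X →L[ℝ] X} (hT : ∀ x : X, 0 ≤ x → 0 ≤ T x) {x : X} (hx : 0 ≤ x)
    (k : ℕ) : 0 ≤ (T ^ k) x := by
  induction k with
  | zero => simpa using hx
  | succ k ih => rw [pow_succ']; exact hT _ ih

theorem ContinuousLinearMap.sum_pow_div_factorial_smul_le_exp_smul_apply {X : Type*}
    [NormedAddCommGroup X] [Lattice X] [HasSolidNorm X] [IsOrderedAddMonoid X]
    [NormedSpace ℝ X] [CompleteSpace X] {T : X →L[ℝ] X} (hT : ∀ x : X, 0 ≤ x → 0 ≤ T x)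
    {x : X} (hx : 0 ≤ x) {c : ℝ} (hc : 0 ≤ c) (s : Finset ℕ) :
    ∑ k ∈ s, (c ^ k / k !) • (T ^ k) x ≤ NormedSpace.exp (c • T) x := by
  have series : HasSum (fun k : ℕ => (c ^ k / k !) • (T ^ k) x) (NormedSpace.exp (c • T) x) := by
    convert (NormedSpace.exp_series_hasSum_exp' (𝕂 := ℝ) (c • T)).mapL
      (ContinuousLinearMap.apply ℝ X x) using 2 with k
    · simp [smul_pow, smul_smul, div_eq_inv_mul]
    · rfl
  exact sum_le_hasSum s (fun k _ => smul_nonneg_of_hasSolidNorm (by positivity)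
    (T.pow_apply_nonneg hT hx k)) series

/-- Let `X` be a Banach lattice which is `q`-concave with constant `1` (here expressed, via the
Krivine calculus and the lattice inequality `(Σ|f_i|^q)^{1/q} ≤ Σ f_i` for positive `f_i`,
through the estimate `hconc` for positive families), and let `T` be a positive operator with
`‖e^{nT}‖ ≤ Ks·eⁿ` for all `n`. Then for `n ≥ 100` and `x ≥ 0`,
`(Σ_{n-√n ≤ k ≤ n} ‖T^k x‖^q)^{1/q} ≤ 28·Ks·√n·‖x‖`. -/
theorem positive_strongly_kreiss_block_bound
    {X : Type*} [NormedAddCommGroup X] [Lattice X] [HasSolidNorm X] [IsOrderedAddMonoid X]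
    [NormedSpace ℝ X] [CompleteSpace X]
    (q : ℝ) (hq : 1 ≤ q)
    (hconc : ∀ (m : ℕ) (f : ℕ → X), (∀ i, 0 ≤ f i) →
      (∑ i ∈ Finset.range m, ‖f i‖ ^ q) ^ (1/q) ≤ ‖∑ i ∈ Finset.range m, f i‖)
    (T : X →L[ℝ] X) (hTpos : ∀ x : X, 0 ≤ x → 0 ≤ T x)
    (Ks : ℝ)
    (hexp : ∀ n : ℕ, ‖NormedSpace.exp ((n : ℝ) • T)‖ ≤ Ks * Real.exp n) :
    ∀ n : ℕ, 100 ≤ n → ∀ x : X, 0 ≤ x →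
      (∑ k ∈ Finset.Icc ⌈(n : ℝ) - Real.sqrt n⌉₊ n, ‖(T ^ k) x‖ ^ q) ^ (1/q) ≤
        28 * Ks * Real.sqrt n * ‖x‖ := by
  intro n hn x hx
  have hq0 : 0 < q := by linarith
  set s := Finset.Icc ⌈(n : ℝ) - √n⌉₊ n
  have weight : ∀ k ∈ s, Real.exp n / (28 * √n) ≤ (n : ℝ) ^ k / k ! := fun k hk => by
    rw [Finset.mem_Icc, Nat.ceil_le] at hk
    rw [div_le_iff₀ (by positivity), mul_comm]
    exact Real.exp_le_mul_sqrt_mul_pow_div_factorial (by omega) hk.1 hk.2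
  have terms_nonneg : ∀ k, 0 ≤ ((n : ℝ) ^ k / k !) • (T ^ k) x := fun k =>
    smul_nonneg_of_hasSolidNorm (by positivity) (T.pow_apply_nonneg hTpos hx k)
  have bound : Real.exp n / (28 * √n) * (∑ k ∈ s, ‖(T ^ k) x‖ ^ q) ^ (1 / q) ≤
      Ks * Real.exp n * ‖x‖ :=
    calc _ ≤ (∑ k ∈ s, ((n : ℝ) ^ k / k ! * ‖(T ^ k) x‖) ^ q) ^ (1 / q) :=
          Real.mul_sum_rpow_rpow_inv_le (by positivity) hq0 (fun _ _ => norm_nonneg _) weight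
      _ = (∑ k ∈ s, ‖((n : ℝ) ^ k / k !) • (T ^ k) x‖ ^ q) ^ (1 / q) := by
          simp only [norm_smul, norm_div, norm_pow, Real.norm_natCast]
      _ ≤ ‖∑ k ∈ s, ((n : ℝ) ^ k / k !) • (T ^ k) x‖ :=
          sum_norm_rpow_rpow_inv_le_of_range hq0 hconc s fun k _ => terms_nonneg k
      _ ≤ ‖NormedSpace.exp ((n : ℝ) • T) x‖ :=
          norm_le_norm_of_nonneg_of_le (Finset.sum_nonneg fun k _ => terms_nonneg k)
            (T.sum_pow_div_factorial_smul_le_exp_smul_apply hTpos hx n.cast_nonneg s)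
      _ ≤ ‖NormedSpace.exp ((n : ℝ) • T)‖ * ‖x‖ := ContinuousLinearMap.le_opNorm _ _
      _ ≤ Ks * Real.exp n * ‖x‖ := by gcongr; exact hexp n
  rw [div_mul_eq_mul_div, div_le_iff₀ (by positivity)] at bound
  exact le_of_mul_le_mul_left (bound.trans_eq (by ring)) (Real.exp_pos n)
end
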